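/- arXiv:1411.3532 — 4 statements merged into one kernel-verified Lean document; each statement's English description precedes it below -/
import Mathlib

section
/- Let G be a subgroup of Homeo⁺(ℝ) acting freely on ℝ (no nontrivial element has a fixed point). Then G is abelian. -/
/-- The group of self-homeomorphisms of a topological space, with `(f * g) x = f (g x)`. -/
instance homeoGroup {X : Type*} [TopologicalSpace X] : Group (X ≃ₜ X) where
  mul f g := g.trans f
  one := Homeomorph.refl X
  inv := Homeomorph.symm
  mul_assoc f g h := rfl
  one_mul f := rfl
  mul_one f := rfl
  inv_mul_cancel f := by ext x; exact f.symm_apply_apply x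

section HolderAux

variable {G : Subgroup (ℝ ≃ₜ ℝ)}

lemma hld_mul_apply (f g : ℝ ≃ₜ ℝ) (x : ℝ) : (f * g) x = f (g x) := rfl

lemma hld_sm (hmono : ∀ g ∈ G, Monotone (⇑g)) {g : ℝ ≃ₜ ℝ} (hg : g ∈ G) :
    StrictMono (⇑g) :=
  (hmono g hg).strictMono_of_injective g.injective

lemma hld_rigid (hfree : ∀ g ∈ G, g ≠ 1 → ∀ x : ℝ, g x ≠ x)
    {g h : ℝ ≃ₜ ℝ} (hg : g ∈ G) (hh : h ∈ G) {x : ℝ} (hx : g x = h x) : g = h := by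
  by_contra hne
  have hmem : h⁻¹ * g ∈ G := G.mul_mem (G.inv_mem hh) hg
  have h1 : h⁻¹ * g ≠ 1 := fun e => hne (inv_mul_eq_one.mp e).symm
  apply hfree _ hmem h1 x
  show h.symm (g x) = x
  rw [hx]; exact h.symm_apply_apply x

lemma hld_comp (hfree : ∀ g ∈ G, g ≠ 1 → ∀ x : ℝ, g x ≠ x)
    {g h : ℝ ≃ₜ ℝ} (hg : g ∈ G) (hh : h ∈ G) {x : ℝ} (hx : g x ≤ h x) :
    ∀ y, g y ≤ h y := by
  intro y
  by_contra hlt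
  push_neg at hlt
  have hne : g ≠ h := by rintro rfl; exact lt_irrefl _ hlt
  have hx' : g x < h x := lt_of_le_of_ne hx (fun e => hne (hld_rigid hfree hg hh e))
  have hc : Continuous fun t : ℝ => h t - g t := h.continuous.sub g.continuous
  have hmem : (0 : ℝ) ∈ Set.Icc ((fun t : ℝ => h t - g t) y) ((fun t : ℝ => h t - g t) x) :=
    ⟨by simp only; linarith, by simp only; linarith⟩
  obtain ⟨t, ht⟩ := intermediate_value_univ y x hc hmem
  have hgt : g t = h t := by simp only at ht; linarith
  exact hne (hld_rigid hfree hg hh hgt)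

lemma hld_compLT (hfree : ∀ g ∈ G, g ≠ 1 → ∀ x : ℝ, g x ≠ x)
    {g h : ℝ ≃ₜ ℝ} (hg : g ∈ G) (hh : h ∈ G) {x : ℝ} (hx : g x < h x) :
    ∀ y, g y < h y := by
  intro y
  refine lt_of_le_of_ne (hld_comp hfree hg hh hx.le y) (fun e => ?_)
  have := hld_rigid hfree hg hh e
  subst this
  exact lt_irrefl _ hx

lemma hld_pow_apply (a : ℝ ≃ₜ ℝ) (n : ℕ) (x : ℝ) : (a ^ (n + 1)) x = a ((a ^ n) x) := by
  rw [pow_succ']; rfl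

lemma hld_arch {a : ℝ ≃ₜ ℝ} (ha : ∀ x, x < a x) (x0 c : ℝ) :
    ∃ N : ℕ, c < (a ^ N) x0 := by
  by_contra hcon
  push_neg at hcon
  have humono : Monotone fun n : ℕ => (a ^ n) x0 :=
    monotone_nat_of_le_succ fun n => by rw [hld_pow_apply]; exact (ha _).le
  have hbdd : BddAbove (Set.range fun n : ℕ => (a ^ n) x0) :=
    ⟨c, by rintro y ⟨n, rfl⟩; exact hcon n⟩
  have hlim := tendsto_atTop_ciSup humono hbdd
  have h1 : Filter.Tendsto (fun n : ℕ => a ((a ^ n) x0)) Filter.atTop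
      (nhds (a (⨆ n : ℕ, (a ^ n) x0))) :=
    (a.continuous.tendsto _).comp hlim
  have h2 : Filter.Tendsto (fun n : ℕ => a ((a ^ n) x0)) Filter.atTop
      (nhds (⨆ n : ℕ, (a ^ n) x0)) := by
    have he : (fun n : ℕ => a ((a ^ n) x0)) = fun n : ℕ => (a ^ (n + 1)) x0 := by
      funext n; rw [hld_pow_apply]
    rw [he]
    exact hlim.comp (Filter.tendsto_add_atTop_nat 1)
  exact (ne_of_gt (ha _)) (tendsto_nhds_unique h1 h2)

lemma hld_pow_lt {a : ℝ ≃ₜ ℝ} (ha : ∀ x, x < a x) (k : ℕ) (x : ℝ) :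
    x < (a ^ (k + 1)) x := by
  induction k with
  | zero => simpa using ha x
  | succ k ih => rw [hld_pow_apply]; exact ih.trans (ha _)

lemma hld_zpow_lt {a : ℝ ≃ₜ ℝ} (ha : ∀ x, x < a x) {m n : ℤ} (h : m < n) (x : ℝ) :
    (a ^ m) x < (a ^ n) x := by
  obtain ⟨k, hk⟩ : ∃ k : ℕ, n - m = (k : ℤ) + 1 := ⟨(n - m - 1).toNat, by omega⟩
  have hnm : a ^ (n - m) = a ^ (k + 1 : ℕ) := by
    rw [hk, show ((k : ℤ) + 1) = ((k + 1 : ℕ) : ℤ) by push_cast; ring, zpow_natCast]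
  have hsum : n - m + m = n := by ring
  calc (a ^ m) x < (a ^ (k + 1 : ℕ)) ((a ^ m) x) := hld_pow_lt ha k _
    _ = (a ^ n) x := by rw [← hnm, ← hld_mul_apply, ← zpow_add, hsum]

lemma hld_floor (hmono : ∀ g ∈ G, Monotone (⇑g)) (hfree : ∀ g ∈ G, g ≠ 1 → ∀ x : ℝ, g x ≠ x)
    {a g : ℝ ≃ₜ ℝ} (haG : a ∈ G) (hgG : g ∈ G) (ha : ∀ x, x < a x) :
    ∃ n : ℤ, (a ^ n) 0 ≤ g 0 ∧ g 0 < (a ^ (n + 1)) 0 := by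
  have hbdd : ∃ b : ℤ, ∀ z : ℤ, (a ^ z) 0 ≤ g 0 → z ≤ b := by
    obtain ⟨N, hN⟩ := hld_arch ha 0 (g 0)
    refine ⟨N, fun z hz => ?_⟩
    by_contra hzc
    push_neg at hzc
    have := hld_zpow_lt ha (show (N : ℤ) < z from by exact_mod_cast hzc) 0
    rw [zpow_natCast] at this
    linarith
  have hinh : ∃ z : ℤ, (a ^ z) 0 ≤ g 0 := by
    obtain ⟨N, hN⟩ := hld_arch ha (g 0) 0
    refine ⟨-(N : ℤ), ?_⟩
    rw [zpow_neg, zpow_natCast]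
    have hsmN : StrictMono (⇑(a ^ N)) := hld_sm hmono (pow_mem haG N)
    have h0 : (a ^ N) ((a ^ N)⁻¹ 0) = 0 := (a ^ N).apply_symm_apply 0
    have : (a ^ N) ((a ^ N)⁻¹ 0) < (a ^ N) (g 0) := by rw [h0]; exact hN
    exact (hsmN.lt_iff_lt.mp this).le
  obtain ⟨n, hn, hmax⟩ := Int.exists_greatest_of_bdd hbdd hinh
  refine ⟨n, hn, ?_⟩
  by_contra hc
  push_neg at hc
  have := hmax (n + 1) hc
  omega

lemma hld_inv_le (hmono : ∀ g ∈ G, Monotone (⇑g)) (hfree : ∀ g ∈ G, g ≠ 1 → ∀ x : ℝ, g x ≠ x)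
    {u v : ℝ ≃ₜ ℝ} (hu : u ∈ G) (hv : v ∈ G) (h : u 0 ≤ v 0) : v⁻¹ 0 ≤ u⁻¹ 0 := by
  have hall := hld_comp hfree hu hv h (v⁻¹ 0)
  have h1 : u (v⁻¹ 0) ≤ 0 := by
    rwa [show v (v⁻¹ 0) = 0 from v.apply_symm_apply 0] at hall
  have h2 : u (u⁻¹ 0) = 0 := u.apply_symm_apply 0
  exact (hld_sm hmono hu).le_iff_le.mp (by rw [h2]; exact h1)

end HolderAux

/-- Hölder's theorem: a subgroup of `Homeo⁺(ℝ)` (orientation preserving, i.e. monotone,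
homeomorphisms of the line) acting freely on `ℝ` is abelian. -/
theorem holder_abelian (G : Subgroup (ℝ ≃ₜ ℝ))
    (hmono : ∀ g ∈ G, Monotone (⇑g))
    (hfree : ∀ g ∈ G, g ≠ 1 → ∀ x : ℝ, g x ≠ x) :
    ∀ g ∈ G, ∀ h ∈ G, g * h = h * g := by
  classical
  by_cases hleast : ∃ a ∈ G, 0 < a 0 ∧ ∀ b ∈ G, 0 < b 0 → a 0 ≤ b 0
  · -- there is a least positive element: G is cyclic
    obtain ⟨a, haG, hapos, hamin⟩ := hleast
    have hax : ∀ x, x < a x := fun x =>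
      hld_compLT hfree G.one_mem haG (show (1 : ℝ ≃ₜ ℝ) 0 < a 0 from hapos) x
    have hcyc : ∀ g ∈ G, ∃ n : ℤ, g = a ^ n := by
      intro g hg
      obtain ⟨n, h1, h2⟩ := hld_floor hmono hfree haG hg hax
      refine ⟨n, ?_⟩
      have hbG : g * (a ^ n)⁻¹ ∈ G := G.mul_mem hg (G.inv_mem (G.zpow_mem haG n))
      have hb0 : 0 ≤ (g * (a ^ n)⁻¹) 0 := by
        have hall := hld_comp hfree (G.zpow_mem haG n) hg h1 ((a ^ n)⁻¹ 0)
        rwa [show (a ^ n) ((a ^ n)⁻¹ 0) = 0 from (a ^ n).apply_symm_apply 0] at hall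
      have hb1 : (g * (a ^ n)⁻¹) 0 < a 0 := by
        have hall := hld_compLT hfree hg (G.zpow_mem haG (n + 1)) h2 ((a ^ n)⁻¹ 0)
        have he : (a ^ (n + 1)) ((a ^ n)⁻¹ 0) = a 0 := by
          rw [← hld_mul_apply, ← zpow_neg, ← zpow_add, show (n + 1) + (-n) = 1 by ring, zpow_one]
        rwa [he] at hall
      have hbone : g * (a ^ n)⁻¹ = 1 := by
        rcases eq_or_lt_of_le hb0 with he | hlt
        · exact hld_rigid hfree hbG G.one_mem
            (show (g * (a ^ n)⁻¹) 0 = (1 : ℝ ≃ₜ ℝ) 0 from he.symm)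
        · exact absurd (hamin _ hbG hlt) (not_le.mpr hb1)
      exact mul_inv_eq_one.mp hbone
    intro g hg h hh
    obtain ⟨m, rfl⟩ := hcyc g hg
    obtain ⟨n, rfl⟩ := hcyc h hh
    rw [← zpow_add, ← zpow_add, add_comm]
  · -- no least positive element: trap commutators
    push_neg at hleast
    have key : ∀ g ∈ G, ∀ h ∈ G, (g * h) 0 ≤ (h * g) 0 := by
      intro g hg h hh
      by_contra hcon
      push_neg at hcon
      have hghG : g * h ∈ G := G.mul_mem hg hh
      have hhgG : h * g ∈ G := G.mul_mem hh hg
      have hdG : (g * h) * (h * g)⁻¹ ∈ G := G.mul_mem hghG (G.inv_mem hhgG)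
      have hdpos : 0 < ((g * h) * (h * g)⁻¹) 0 := by
        have := hld_compLT hfree hhgG hghG hcon ((h * g)⁻¹ 0)
        rwa [show (h * g) ((h * g)⁻¹ 0) = 0 from (h * g).apply_symm_apply 0] at this
      have hbound : ∀ ε ∈ G, 0 < ε 0 → ((g * h) * (h * g)⁻¹) 0 < (ε * ε) 0 := by
        intro ε hεG hεpos
        have hεx : ∀ x, x < ε x := fun x =>
          hld_compLT hfree G.one_mem hεG (show (1 : ℝ ≃ₜ ℝ) 0 < ε 0 from hεpos) x
        obtain ⟨m, hm1, hm2⟩ := hld_floor hmono hfree hεG hg hεx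
        obtain ⟨n, hn1, hn2⟩ := hld_floor hmono hfree hεG hh hεx
        have hz : ∀ k : ℤ, ε ^ k ∈ G := fun k => G.zpow_mem hεG k
        have h1 : (g * h) 0 < (ε ^ (m + n + 2)) 0 := by
          have s1 : g (h 0) < (ε ^ (m + 1)) (h 0) := hld_compLT hfree hg (hz (m + 1)) hm2 (h 0)
          have s2 : (ε ^ (m + 1)) (h 0) < (ε ^ (m + 1)) ((ε ^ (n + 1)) 0) :=
            (hld_sm hmono (hz (m + 1))) hn2
          have s3 : (ε ^ (m + 1)) ((ε ^ (n + 1)) 0) = (ε ^ (m + n + 2)) 0 := by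
            rw [← hld_mul_apply, ← zpow_add, show (m + 1) + (n + 1) = m + n + 2 by ring]
          calc (g * h) 0 = g (h 0) := rfl
            _ < (ε ^ (m + 1)) (h 0) := s1
            _ < (ε ^ (m + 1)) ((ε ^ (n + 1)) 0) := s2
            _ = (ε ^ (m + n + 2)) 0 := s3
        have h2 : (ε ^ (m + n)) 0 ≤ (h * g) 0 := by
          have he : ε ^ (m + n) = ε ^ n * ε ^ m := by rw [← zpow_add, add_comm]
          have s1 : (ε ^ n) ((ε ^ m) 0) ≤ (ε ^ n) (g 0) := (hmono _ (hz n)) hm1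
          have s2 : (ε ^ n) (g 0) ≤ h (g 0) := hld_comp hfree (hz n) hh hn1 (g 0)
          calc (ε ^ (m + n)) 0 = (ε ^ n) ((ε ^ m) 0) := by rw [he]; rfl
            _ ≤ (ε ^ n) (g 0) := s1
            _ ≤ h (g 0) := s2
            _ = (h * g) 0 := rfl
        have h3 : (h * g)⁻¹ 0 ≤ (ε ^ (-(m + n))) 0 := by
          have := hld_inv_le hmono hfree (hz (m + n)) hhgG h2
          rwa [zpow_neg]
        have s5 : (g * h) ((h * g)⁻¹ 0) < (ε ^ (m + n + 2)) ((h * g)⁻¹ 0) :=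
          hld_compLT hfree hghG (hz _) h1 _
        have s6 : (ε ^ (m + n + 2)) ((h * g)⁻¹ 0) ≤ (ε ^ (m + n + 2)) ((ε ^ (-(m + n))) 0) :=
          (hmono _ (hz _)) h3
        have s7 : (ε ^ (m + n + 2)) ((ε ^ (-(m + n))) 0) = (ε * ε) 0 := by
          rw [← hld_mul_apply, ← zpow_add, show (m + n + 2) + (-(m + n)) = 2 by ring, zpow_two]
        calc ((g * h) * (h * g)⁻¹) 0 = (g * h) ((h * g)⁻¹ 0) := rfl
          _ < (ε ^ (m + n + 2)) ((h * g)⁻¹ 0) := s5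
          _ ≤ (ε ^ (m + n + 2)) ((ε ^ (-(m + n))) 0) := s6
          _ = (ε * ε) 0 := s7
      obtain ⟨ε, hεG, hεpos, hεlt⟩ := hleast _ hdG hdpos
      by_cases hcase : (ε * ε) 0 ≤ ((g * h) * (h * g)⁻¹) 0
      · exact absurd (hbound ε hεG hεpos) (not_lt.mpr hcase)
      · push_neg at hcase
        have hηG : (g * h) * (h * g)⁻¹ * ε⁻¹ ∈ G := G.mul_mem hdG (G.inv_mem hεG)
        have hη0 : 0 < ((g * h) * (h * g)⁻¹ * ε⁻¹) 0 := by
          have := hld_compLT hfree hεG hdG hεlt (ε⁻¹ 0)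
          rwa [show ε (ε⁻¹ 0) = 0 from ε.apply_symm_apply 0] at this
        have hηε : ((g * h) * (h * g)⁻¹ * ε⁻¹) 0 < ε 0 := by
          have := hld_compLT hfree hdG (G.mul_mem hεG hεG) hcase (ε⁻¹ 0)
          rwa [show (ε * ε) (ε⁻¹ 0) = ε 0 from congrArg ε (ε.apply_symm_apply 0)] at this
        have hηη : (((g * h) * (h * g)⁻¹ * ε⁻¹) * ((g * h) * (h * g)⁻¹ * ε⁻¹)) 0
            < ((g * h) * (h * g)⁻¹) 0 := by
          have ha1 : ((g * h) * (h * g)⁻¹ * ε⁻¹) (((g * h) * (h * g)⁻¹ * ε⁻¹) 0)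
              < ((g * h) * (h * g)⁻¹ * ε⁻¹) (ε 0) := (hld_sm hmono hηG) hηε
          have ha2 : ((g * h) * (h * g)⁻¹ * ε⁻¹) (ε 0) = ((g * h) * (h * g)⁻¹) 0 :=
            congrArg ((g * h) * (h * g)⁻¹) (ε.symm_apply_apply 0)
          calc (((g * h) * (h * g)⁻¹ * ε⁻¹) * ((g * h) * (h * g)⁻¹ * ε⁻¹)) 0
              = ((g * h) * (h * g)⁻¹ * ε⁻¹) (((g * h) * (h * g)⁻¹ * ε⁻¹) 0) := rfl
            _ < ((g * h) * (h * g)⁻¹ * ε⁻¹) (ε 0) := ha1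
            _ = ((g * h) * (h * g)⁻¹) 0 := ha2
        exact absurd (hbound _ hηG hη0) (not_lt.mpr hηη.le)
    intro g hg h hh
    exact hld_rigid hfree (G.mul_mem hg hh) (G.mul_mem hh hg)
      (le_antisymm (key g hg h hh) (key h hh g hg))
end

section
/- Suppose a subgroup G of Homeo⁺(S¹) admits two dense G-invariant laminations Λ₁ and Λ₂ whose sets of endpoints are disjoint. Then each of Λ₁ and Λ₂ is totally disconnected, i.e., no open subset of the disc is foliated by the chords of either lamination. -/
open Set Filter Topology

noncomputable section

/-- Two pairs `(a,b)` and `(c,d)` of distinct points of the circle are *linked*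
if each connected component of `S¹ \ {a,b}` contains precisely one of `c`, `d`. -/
def Linked (a b c d : Circle) : Prop :=
  a ≠ b ∧ c ≠ d ∧ c ∉ ({a, b} : Set Circle) ∧ d ∉ ({a, b} : Set Circle) ∧
    ∀ x ∈ ({a, b}ᶜ : Set Circle),
      Xor' (c ∈ connectedComponentIn ({a, b}ᶜ : Set Circle) x)
           (d ∈ connectedComponentIn ({a, b}ᶜ : Set Circle) x)

/-- A lamination of `S¹`: a closed subset of the set of unordered pairs of distinct
points of `S¹` (encoded as a symmetric set of ordered pairs) whose elements are
pairwise unlinked. -/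
def IsLamination (Λ : Set (Circle × Circle)) : Prop :=
  (∀ l ∈ Λ, l.1 ≠ l.2) ∧ (∀ l ∈ Λ, (l.2, l.1) ∈ Λ) ∧
    (∀ l : Circle × Circle, l.1 ≠ l.2 → l ∈ closure Λ → l ∈ Λ) ∧
    (∀ l ∈ Λ, ∀ l' ∈ Λ, ¬ Linked l.1 l.2 l'.1 l'.2)

/-- The closed unit disc in `ℂ`, whose boundary is the circle. -/
def disc : Set ℂ := Metric.closedBall 0 1

/-- The chord of the disc corresponding to a leaf. -/
def chord (l : Circle × Circle) : Set ℂ := segment ℝ (l.1 : ℂ) (l.2 : ℂ)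

/-- The union of all chords of a lamination. -/
def chords (Λ : Set (Circle × Circle)) : Set ℂ := ⋃ l ∈ Λ, chord l

/-- A gap of a lamination: the closure of a connected component of the complement in
the disc of the union of the chords. -/
def IsGap (Λ : Set (Circle × Circle)) (Gp : Set ℂ) : Prop :=
  ∃ x ∈ disc \ chords Λ, Gp = closure (connectedComponentIn (disc \ chords Λ) x)

/-- A finite-sided ideal polygon: the convex hull of a finite set of points on the
circle. -/
def IsIdealPolygon (Gp : Set ℂ) : Prop :=
  ∃ V : Finset ℂ, (V : Set ℂ) ⊆ Metric.sphere 0 1 ∧ Gp = convexHull ℝ (V : Set ℂ)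

/-- A lamination is very full if each of its gaps is a finite-sided ideal polygon. -/
def VeryFull (Λ : Set (Circle × Circle)) : Prop :=
  ∀ Gp : Set ℂ, IsGap Λ Gp → IsIdealPolygon Gp

/-- Two ordered pairs represent the same unordered leaf. -/
def SamePair (l l' : Circle × Circle) : Prop :=
  ({l.1, l.2} : Set Circle) = {l'.1, l'.2}

/-- Two leaves share an endpoint. -/
def SharesEndpoint (l l' : Circle × Circle) : Prop :=
  (({l.1, l.2} : Set Circle) ∩ {l'.1, l'.2}).Nonempty

/-- A lamination is loose if no two distinct leaves share an endpoint unless they are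
edges of the same gap. -/
def Loose (Λ : Set (Circle × Circle)) : Prop :=
  ∀ l ∈ Λ, ∀ l' ∈ Λ, ¬ SamePair l l' → SharesEndpoint l l' →
    ∃ Gp : Set ℂ, IsGap Λ Gp ∧ chord l ⊆ Gp ∧ chord l' ⊆ Gp

/-- `p` is an endpoint of some leaf of `Λ`. -/
def IsEndpoint (Λ : Set (Circle × Circle)) (p : Circle) : Prop :=
  ∃ l ∈ Λ, p = l.1 ∨ p = l.2

/-- A set `U` in the disc is foliated by the chords of `Λ` if every point of `U` lies
on a chord of `Λ`, and distinct chords through points of `U` are disjoint. -/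
def Foliates (Λ : Set (Circle × Circle)) (U : Set ℂ) : Prop :=
  (∀ x ∈ U, ∃ l ∈ Λ, x ∈ chord l) ∧
    ∀ l ∈ Λ, ∀ l' ∈ Λ, (chord l ∩ U).Nonempty → (chord l' ∩ U).Nonempty →
      ¬ SamePair l l' → Disjoint (chord l) (chord l')

/-- A lamination is totally disconnected if no nonempty (relatively) open subset of
the disc is foliated by its chords. -/
def TotallyDisconnectedLam (Λ : Set (Circle × Circle)) : Prop :=
  ¬ ∃ U : Set ℂ, U.Nonempty ∧ (∃ V : Set ℂ, IsOpen V ∧ U = V ∩ disc) ∧ Foliates Λ U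

/-- A lamination is dense if the set of endpoints of its leaves is dense in `S¹`. -/
def DenseLam (Λ : Set (Circle × Circle)) : Prop :=
  Dense {p : Circle | IsEndpoint Λ p}

/-!
If `Λ` foliated a nonempty open subset of the disc, pick in it a short segment `σ` transverse to
the leaves. Every leaf through `σ` crosses the line of `σ`, so exactly one of its endpoints lies on
the positive side. The oriented leaves through `σ` form a compact set projecting bijectively, hence
homeomorphically, onto `σ`; so their positive endpoints form a connected subset of `S¹` with at
least two points that misses a point: an open arc of endpoints of `Λ`. A lamination with dense
endpoints has an endpoint in that arc.
-/

theorem IsCompact.isPreconnected_of_injOn {X Y : Type*} [TopologicalSpace X] [TopologicalSpace Y]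
    [T2Space Y] {s : Set X} {f : X → Y} (hs : IsCompact s) (hf : ContinuousOn f s)
    (hinj : InjOn f s) (hfs : IsPreconnected (f '' s)) : IsPreconnected s := by
  have : CompactSpace s := isCompact_iff_compactSpace.mp hs
  have hemb := hf.domRestrict.isClosedEmbedding (injOn_iff_injective.mp hinj)
  rw [isPreconnected_iff_preconnectedSpace, preconnectedSpace_iff_univ,
    ← hemb.isInducing.isPreconnected_image, image_univ, range_domRestrict]
  exact hfs

theorem mul_neg_or_eq_zero_of_zero_mem_openSegment {x y : ℝ} (h : 0 ∈ openSegment ℝ x y) :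
    x * y < 0 ∨ (x = 0 ∧ y = 0) := by
  rcases eq_or_ne x y with rfl | hxy
  · rw [openSegment_same, mem_singleton_iff] at h
    exact Or.inr ⟨h.symm, h.symm⟩
  · rw [openSegment_eq_Ioo' hxy] at h
    left
    rcases le_total x y with hle | hle
    · simp only [min_eq_left hle, max_eq_right hle, mem_Ioo] at h
      nlinarith
    · simp only [min_eq_right hle, max_eq_left hle, mem_Ioo] at h
      nlinarith

namespace Circle

theorem nonempty_interior_of_isPreconnected {K : Set Circle} (hK : IsPreconnected K)
    {a b c : Circle} (ha : a ∈ K) (hb : b ∈ K) (hab : a ≠ b) (hc : c ∉ K) :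
    (interior K).Nonempty := by
  -- rotating `c` to `-1`, where `arg` jumps, makes `g` continuous off `c`
  set g : Circle → ℝ := fun w => Complex.arg (w * (c⁻¹ * exp Real.pi) : Circle)
  have hg_inj : Function.Injective g := injective_arg.comp (mul_left_injective _)
  have hg_cont : ContinuousOn g {c}ᶜ := by
    intro w hw
    refine ((Complex.continuousAt_arg ?_).comp (by fun_prop)).continuousWithinAt
    rw [Complex.mem_slitPlane_iff_arg]
    refine ⟨?_, Circle.coe_ne_zero _⟩
    have hπ : Complex.arg (exp Real.pi) = Real.pi := arg_exp (by linarith [Real.pi_pos]) le_rfl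
    have hne : w * (c⁻¹ * exp Real.pi) ≠ exp Real.pi := by
      rwa [← mul_assoc, Ne, mul_eq_right, mul_inv_eq_one]
    exact fun h => hne (injective_arg (h.trans hπ.symm))
  have hKc : K ⊆ {c}ᶜ := fun w hw hwc => hc (hwc ▸ hw)
  have hI : uIcc (g a) (g b) ⊆ g '' K :=
    (hK.image g (hg_cont.mono hKc)).ordConnected.uIcc_subset (mem_image_of_mem g ha)
      (mem_image_of_mem g hb)
  have hW : IsOpen ({c}ᶜ ∩ g ⁻¹' Ioo (g a ⊓ g b) (g a ⊔ g b)) :=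
    hg_cont.isOpen_inter_preimage isOpen_compl_singleton isOpen_Ioo
  have hWK : {c}ᶜ ∩ g ⁻¹' Ioo (g a ⊓ g b) (g a ⊔ g b) ⊆ K := fun w hw => by
    obtain ⟨k, hk, hkw⟩ := hI (Ioo_subset_Icc_self hw.2)
    exact hg_inj hkw ▸ hk
  obtain ⟨y, hy⟩ := nonempty_Ioo.mpr (inf_lt_sup.mpr (hg_inj.ne hab))
  obtain ⟨k, hk, rfl⟩ := hI (Ioo_subset_Icc_self hy)
  exact ⟨k, interior_mono hWK (hW.interior_eq.symm ▸ ⟨hKc hk, hy⟩)⟩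

end Circle

theorem isCompact_segment {E : Type*} [AddCommGroup E] [Module ℝ E] [TopologicalSpace E]
    [IsTopologicalAddGroup E] [ContinuousSMul ℝ E] (x y : E) : IsCompact (segment ℝ x y) := by
  rw [segment_eq_image_lineMap]
  exact isCompact_Icc.image AffineMap.lineMap_continuous

/-- Signed distance of `w` from the line `p + ℝ e`, in units of `‖e‖`. -/
def signedOffset (p e w : ℂ) : ℝ := ((w - p) / e).im

theorem continuous_signedOffset (p e : ℂ) : Continuous (signedOffset p e) := by
  unfold signedOffset
  fun_prop

theorem signedOffset_eq_zero_iff {p e w : ℂ} (he : e ≠ 0) :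
    signedOffset p e w = 0 ↔ ∃ t : ℝ, w = p + t * e := by
  constructor
  · intro h
    refine ⟨((w - p) / e).re, ?_⟩
    have hreal : (((w - p) / e).re : ℂ) = (w - p) / e :=
      Complex.ext (by simp) (by rw [Complex.ofReal_im]; exact h.symm)
    rw [hreal]
    field_simp
    ring
  · rintro ⟨t, rfl⟩
    simp [signedOffset, he]

theorem signedOffset_add_mul_I {p e : ℂ} (he : e ≠ 0) (w : ℂ) (ρ : ℝ) :
    signedOffset p e (w + ρ * Complex.I * e) = signedOffset p e w + ρ := by
  have : (w + ρ * Complex.I * e - p) / e = (w - p) / e + ρ * Complex.I := by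
    field_simp
    ring
  simp [signedOffset, this]

theorem signedOffset_eq_zero_of_mem_segment {p q w : ℂ} (hw : w ∈ segment ℝ p q) :
    signedOffset p (q - p) w = 0 := by
  rcases eq_or_ne q p with rfl | hqp
  · simp [signedOffset]
  rw [segment_eq_image'] at hw
  obtain ⟨t, -, rfl⟩ := hw
  exact (signedOffset_eq_zero_iff (sub_ne_zero.mpr hqp)).mpr ⟨t, by simp [Complex.real_smul]⟩

theorem signedOffset_mem_openSegment {p e a b z : ℂ} (hz : z ∈ openSegment ℝ a b) :
    signedOffset p e z ∈ openSegment ℝ (signedOffset p e a) (signedOffset p e b) := by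
  obtain ⟨s, t, hs, ht, hst, rfl⟩ := hz
  refine ⟨s, t, hs, ht, hst, ?_⟩
  have hstC : (s : ℂ) + t = 1 := by exact_mod_cast hst
  have : (s • a + t • b - p) / e = s * ((a - p) / e) + t * ((b - p) / e) := by
    rw [Complex.real_smul, Complex.real_smul]
    linear_combination (p / e) * hstC
  simp only [signedOffset]
  rw [this]
  simp

theorem mem_chord_of_collinear {a b : Circle} {w : ℂ} (hab : a ≠ b) (hw : ‖w‖ < 1)
    (h : Collinear ℝ ({(a : ℂ), w, (b : ℂ)} : Set ℂ)) : w ∈ chord (a, b) :=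
  (EuclideanGeometry.sbtw_of_collinear_of_dist_center_lt_radius (s := ⟨0, 1⟩) h
    (by simp [EuclideanGeometry.mem_sphere, Circle.norm_coe]) (by simpa using hw)
    (by simp [EuclideanGeometry.mem_sphere, Circle.norm_coe])
    (Circle.coe_injective.ne hab)).wbtw.mem_segment

theorem mem_chord_of_signedOffset_eq_zero {a b : Circle} (hab : a ≠ b) {p e w : ℂ} (he : e ≠ 0)
    (ha : signedOffset p e a = 0) (hb : signedOffset p e b = 0) (hw : signedOffset p e w = 0)
    (hw1 : ‖w‖ < 1) : w ∈ chord (a, b) := by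
  refine mem_chord_of_collinear hab hw1
    ((collinear_iff_exists_forall_eq_smul_vadd _).mpr ⟨p, e, ?_⟩)
  simp only [mem_insert_iff, mem_singleton_iff, forall_eq_or_imp, forall_eq, vadd_eq_add,
    Complex.real_smul, add_comm _ p]
  exact ⟨(signedOffset_eq_zero_iff he).mp ha, (signedOffset_eq_zero_iff he).mp hw,
    (signedOffset_eq_zero_iff he).mp hb⟩

theorem ne_of_mem_chord {l : Circle × Circle} {z : ℂ} (hz : ‖z‖ < 1) (h : z ∈ chord l) :
    l.1 ≠ l.2 := by
  intro heq
  rw [chord, heq, segment_same, mem_singleton_iff] at h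
  exact (h ▸ Circle.norm_coe l.2).ge.not_gt hz

theorem mem_openSegment_of_mem_chord {l : Circle × Circle} {z : ℂ} (hz : ‖z‖ < 1)
    (h : z ∈ chord l) : z ∈ openSegment ℝ (l.1 : ℂ) l.2 :=
  mem_openSegment_of_ne_left_right (by rintro rfl; exact (Circle.norm_coe _).ge.not_gt hz)
    (by rintro rfl; exact (Circle.norm_coe _).ge.not_gt hz) h

theorem isClosed_setOf_mem_chord : IsClosed {q : ℂ × (Circle × Circle) | q.1 ∈ chord q.2} := by
  simp only [chord, mem_segment_iff_wbtw, ← dist_add_dist_eq_iff]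
  exact isClosed_eq (by fun_prop) (by fun_prop)

theorem chord_swap (l : Circle × Circle) : chord l.swap = chord l := segment_symm ℝ _ _

theorem SamePair.chord_eq {l l' : Circle × Circle} (h : SamePair l l') : chord l = chord l' := by
  rcases Set.pair_eq_pair_iff.mp h with ⟨h1, h2⟩ | ⟨h1, h2⟩
  · simp [chord, h1, h2]
  · simp [chord, h1, h2, segment_symm]

theorem SamePair.eq_or_eq_swap {l l' : Circle × Circle} (h : SamePair l l') :
    l' = l ∨ l' = l.swap := by
  rcases Set.pair_eq_pair_iff.mp h with ⟨h1, h2⟩ | ⟨h1, h2⟩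
  · exact Or.inl (Prod.ext h1.symm h2.symm)
  · exact Or.inr (Prod.ext h2.symm h1.symm)

theorem Foliates.mono {Λ : Set (Circle × Circle)} {U U' : Set ℂ} (h : Foliates Λ U)
    (hU : U' ⊆ U) : Foliates Λ U' :=
  ⟨fun x hx => h.1 x (hU hx), fun l hl l' hl' hlU hl'U =>
    h.2 l hl l' hl' (hlU.mono (inter_subset_inter_right _ hU))
      (hl'U.mono (inter_subset_inter_right _ hU))⟩

theorem Foliates.samePair {Λ : Set (Circle × Circle)} {U : Set ℂ} (h : Foliates Λ U)
    {l l' : Circle × Circle} (hl : l ∈ Λ) (hl' : l' ∈ Λ) {x : ℂ} (hx : x ∈ U)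
    (hxl : x ∈ chord l) (hxl' : x ∈ chord l') : SamePair l l' := by
  by_contra hne
  exact disjoint_left.mp (h.2 l hl l' hl' ⟨x, hxl, hx⟩ ⟨x, hxl', hx⟩ hne) hxl hxl'

theorem IsLamination.swap_mem {Λ : Set (Circle × Circle)} (hΛ : IsLamination Λ)
    {l : Circle × Circle} (hl : l ∈ Λ) : l.swap ∈ Λ :=
  hΛ.2.1 l hl

theorem IsLamination.mem_of_mem_closure {Λ : Set (Circle × Circle)} (hΛ : IsLamination Λ)
    {l : Circle × Circle} (hl : l ∈ closure Λ) (hne : l.1 ≠ l.2) : l ∈ Λ :=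
  hΛ.2.2.1 l hne hl

/-- Leaves `l` through points `z` of `[x₀, x₁]`, oriented so that `l.1` is not on the negative side
of the line `x₀x₁`. Taking `closure Λ` makes this set compact; over a transversal it adds
nothing. -/
def leavesAcross (Λ : Set (Circle × Circle)) (x₀ x₁ : ℂ) : Set (ℂ × (Circle × Circle)) :=
  {q | q.1 ∈ segment ℝ x₀ x₁ ∧ q.2 ∈ closure Λ ∧ q.1 ∈ chord q.2 ∧
    0 ≤ signedOffset x₀ (x₁ - x₀) q.2.1}

theorem isCompact_leavesAcross (Λ : Set (Circle × Circle)) (x₀ x₁ : ℂ) :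
    IsCompact (leavesAcross Λ x₀ x₁) := by
  refine ((isCompact_segment x₀ x₁).prod isCompact_univ).of_isClosed_subset ?_
    fun q hq => ⟨hq.1, mem_univ _⟩
  exact ((isCompact_segment x₀ x₁).isClosed.preimage continuous_fst).inter
    ((isClosed_closure.preimage continuous_snd).inter (isClosed_setOf_mem_chord.inter
      (isClosed_le continuous_const ((continuous_signedOffset _ _).comp (by fun_prop)))))

structure IsTransversal (Λ : Set (Circle × Circle)) (x₀ x₁ : ℂ) : Prop where
  foliates : Foliates Λ (segment ℝ x₀ x₁)
  subset_ball : segment ℝ x₀ x₁ ⊆ Metric.ball 0 1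
  ne : x₀ ≠ x₁
  not_mem_chord : ∀ l ∈ Λ, x₀ ∈ chord l → x₁ ∉ chord l

namespace IsTransversal

variable {Λ : Set (Circle × Circle)} {x₀ x₁ : ℂ}

theorem norm_lt_one (h : IsTransversal Λ x₀ x₁) {z : ℂ} (hz : z ∈ segment ℝ x₀ x₁) : ‖z‖ < 1 := by
  simpa using h.subset_ball hz

theorem signedOffset_mul_neg (h : IsTransversal Λ x₀ x₁) {l : Circle × Circle} (hl : l ∈ Λ)
    {z : ℂ} (hz : z ∈ segment ℝ x₀ x₁) (hzl : z ∈ chord l) :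
    signedOffset x₀ (x₁ - x₀) l.1 * signedOffset x₀ (x₁ - x₀) l.2 < 0 := by
  have he : x₁ - x₀ ≠ 0 := sub_ne_zero.mpr h.ne.symm
  have hsides := signedOffset_mem_openSegment (p := x₀) (e := x₁ - x₀)
    (mem_openSegment_of_mem_chord (h.norm_lt_one hz) hzl)
  rw [signedOffset_eq_zero_of_mem_segment hz] at hsides
  refine (mul_neg_or_eq_zero_of_zero_mem_openSegment hsides).resolve_right ?_
  -- otherwise the leaf lies on the line `x₀x₁`, so it contains both ends of the segment
  rintro ⟨h₁, h₂⟩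
  have hl₁₂ := ne_of_mem_chord (h.norm_lt_one hz) hzl
  refine h.not_mem_chord l hl ?_ ?_ <;> refine mem_chord_of_signedOffset_eq_zero hl₁₂ he h₁ h₂ ?_ ?_
  exacts [signedOffset_eq_zero_of_mem_segment (left_mem_segment ℝ x₀ x₁),
    h.norm_lt_one (left_mem_segment ℝ x₀ x₁),
    signedOffset_eq_zero_of_mem_segment (right_mem_segment ℝ x₀ x₁),
    h.norm_lt_one (right_mem_segment ℝ x₀ x₁)]

theorem mem_of_mem_leavesAcross (h : IsTransversal Λ x₀ x₁) (hΛ : IsLamination Λ)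
    {q : ℂ × (Circle × Circle)} (hq : q ∈ leavesAcross Λ x₀ x₁) : q.2 ∈ Λ :=
  hΛ.mem_of_mem_closure hq.2.1 (ne_of_mem_chord (h.norm_lt_one hq.1) hq.2.2.1)

theorem signedOffset_snd_neg (h : IsTransversal Λ x₀ x₁) (hΛ : IsLamination Λ)
    {q : ℂ × (Circle × Circle)} (hq : q ∈ leavesAcross Λ x₀ x₁) :
    signedOffset x₀ (x₁ - x₀) q.2.2 < 0 :=
  neg_of_mul_neg_right (h.signedOffset_mul_neg (h.mem_of_mem_leavesAcross hΛ hq) hq.1 hq.2.2.1)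
    hq.2.2.2

theorem injOn_fst_leavesAcross (h : IsTransversal Λ x₀ x₁) (hΛ : IsLamination Λ) :
    InjOn Prod.fst (leavesAcross Λ x₀ x₁) := by
  rintro ⟨z, l⟩ hq ⟨z', l'⟩ hq' (rfl : z = z')
  have hsame := h.foliates.samePair (h.mem_of_mem_leavesAcross hΛ hq)
    (h.mem_of_mem_leavesAcross hΛ hq') hq.1 hq.2.2.1 hq'.2.2.1
  rcases hsame.eq_or_eq_swap with rfl | rfl
  · rfl
  · exact absurd hq'.2.2.2 (h.signedOffset_snd_neg hΛ hq).not_ge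

theorem image_fst_leavesAcross (h : IsTransversal Λ x₀ x₁) (hΛ : IsLamination Λ) :
    Prod.fst '' leavesAcross Λ x₀ x₁ = segment ℝ x₀ x₁ := by
  refine (image_subset_iff.mpr fun q hq => hq.1).antisymm fun z hz => ?_
  obtain ⟨l, hl, hzl⟩ := h.foliates.1 z hz
  by_cases hpos : 0 ≤ signedOffset x₀ (x₁ - x₀) l.1
  · exact ⟨(z, l), ⟨hz, subset_closure hl, hzl, hpos⟩, rfl⟩
  · refine ⟨(z, l.swap), ⟨hz, subset_closure (hΛ.swap_mem hl), (chord_swap l).symm ▸ hzl, ?_⟩,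
      rfl⟩
    exact (pos_of_mul_neg_right (h.signedOffset_mul_neg hl hz hzl) (not_le.mp hpos).le).le

theorem isPreconnected_leavesAcross (h : IsTransversal Λ x₀ x₁) (hΛ : IsLamination Λ) :
    IsPreconnected (leavesAcross Λ x₀ x₁) :=
  (isCompact_leavesAcross Λ x₀ x₁).isPreconnected_of_injOn continuous_fst.continuousOn
    (h.injOn_fst_leavesAcross hΛ)
    (h.image_fst_leavesAcross hΛ ▸ (convex_segment x₀ x₁).isPreconnected)

theorem nonempty_interior_endpoints (h : IsTransversal Λ x₀ x₁) (hΛ : IsLamination Λ) :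
    (interior {p | IsEndpoint Λ p}).Nonempty := by
  obtain ⟨⟨z₀, l₀⟩, hq₀, hz₀ : z₀ = x₀⟩ : x₀ ∈ Prod.fst '' leavesAcross Λ x₀ x₁ :=
    (h.image_fst_leavesAcross hΛ).symm ▸ left_mem_segment ℝ x₀ x₁
  obtain ⟨⟨z₁, l₁⟩, hq₁, hz₁ : z₁ = x₁⟩ : x₁ ∈ Prod.fst '' leavesAcross Λ x₀ x₁ :=
    (h.image_fst_leavesAcross hΛ).symm ▸ right_mem_segment ℝ x₀ x₁
  have hl₀ : l₀ ∈ Λ := h.mem_of_mem_leavesAcross hΛ hq₀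
  have hl₁ : l₁ ∈ Λ := h.mem_of_mem_leavesAcross hΛ hq₁
  have hne : l₀.1 ≠ l₁.1 := by
    intro heq
    have hsame : SamePair l₀ l₁ := by
      by_contra hns
      exact disjoint_left.mp (h.foliates.2 _ hl₀ _ hl₁ ⟨z₀, hq₀.2.2.1, hq₀.1⟩
        ⟨z₁, hq₁.2.2.1, hq₁.1⟩ hns) (left_mem_segment ℝ _ _) (heq ▸ left_mem_segment ℝ _ _)
    exact h.not_mem_chord l₀ hl₀ (hz₀ ▸ hq₀.2.2.1) (hsame.chord_eq ▸ hz₁ ▸ hq₁.2.2.1)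
  have hc : l₀.2 ∉ (fun q => q.2.1) '' leavesAcross Λ x₀ x₁ := by
    rintro ⟨q, hq, hql⟩
    exact (h.signedOffset_snd_neg hΛ hq₀).not_ge (hql ▸ hq.2.2.2)
  refine (Circle.nonempty_interior_of_isPreconnected
    ((h.isPreconnected_leavesAcross hΛ).image _ (by fun_prop)) (mem_image_of_mem _ hq₀)
    (mem_image_of_mem _ hq₁) hne hc).mono (interior_mono ?_)
  rintro _ ⟨q, hq, rfl⟩
  exact ⟨q.2, h.mem_of_mem_leavesAcross hΛ hq, Or.inl rfl⟩

end IsTransversal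

theorem Foliates.exists_isTransversal {Λ : Set (Circle × Circle)} {O : Set ℂ} (hfol : Foliates Λ O)
    (hO : IsOpen O) (hO₁ : O ⊆ Metric.ball 0 1) (hne : O.Nonempty) :
    ∃ x₀ x₁, IsTransversal Λ x₀ x₁ := by
  obtain ⟨x₀, hx₀⟩ := hne
  obtain ⟨l₀, hl₀, hx₀l₀⟩ := hfol.1 x₀ hx₀
  obtain ⟨r, hr, hrO⟩ := Metric.isOpen_iff.mp hO x₀ hx₀
  set d : ℂ := l₀.2 - l₀.1
  have hd : d ≠ 0 := sub_ne_zero.mpr <| Circle.coe_injective.ne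
    (ne_of_mem_chord (by simpa using hO₁ hx₀) hx₀l₀).symm
  -- move `x₀` by `r / 2` orthogonally to the leaf through it
  set ρ : ℝ := r / (2 * ‖d‖)
  set x₁ : ℂ := x₀ + ρ * Complex.I * d
  have hx₁ : x₁ ∈ Metric.ball x₀ r := by
    have : ‖ρ * Complex.I * d‖ = r / 2 := by
      simp only [norm_mul, Complex.norm_real, Complex.norm_I, Real.norm_eq_abs, ρ]
      rw [abs_of_pos (by positivity)]
      field_simp
    rw [Metric.mem_ball, dist_eq_norm, add_sub_cancel_left, this]
    linarith
  have hseg : segment ℝ x₀ x₁ ⊆ O :=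
    ((convex_ball x₀ r).segment_subset (Metric.mem_ball_self hr) hx₁).trans hrO
  have hoff : signedOffset l₀.1 d x₁ ≠ 0 := by
    rw [signedOffset_add_mul_I hd, signedOffset_eq_zero_of_mem_segment hx₀l₀, zero_add]
    positivity
  refine ⟨x₀, x₁, hfol.mono hseg, hseg.trans hO₁, ?_, fun l hl hx₀l hx₁l => ?_⟩
  · exact fun h => hoff (h ▸ signedOffset_eq_zero_of_mem_segment hx₀l₀)
  · have hx₁l₀ : x₁ ∈ chord l₀ := (hfol.samePair hl₀ hl hx₀ hx₀l₀ hx₀l).chord_eq ▸ hx₁l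
    exact hoff (signedOffset_eq_zero_of_mem_segment hx₁l₀)

theorem IsLamination.totallyDisconnectedLam_of_dense_of_disjoint {Λ Λ' : Set (Circle × Circle)}
    (hΛ : IsLamination Λ) (hd : DenseLam Λ')
    (hdisj : Disjoint {p : Circle | IsEndpoint Λ p} {p : Circle | IsEndpoint Λ' p}) :
    TotallyDisconnectedLam Λ := by
  rintro ⟨_, hU, ⟨V, hV, rfl⟩, hfol⟩
  have hV₁ : (V ∩ Metric.ball 0 1).Nonempty := by
    rwa [inter_comm, ← closure_inter_open_nonempty_iff hV, closure_ball 0 one_ne_zero, inter_comm]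
  have hfol₁ : Foliates Λ (V ∩ Metric.ball 0 1) :=
    hfol.mono (inter_subset_inter_right V Metric.ball_subset_closedBall)
  obtain ⟨x₀, x₁, htr⟩ :=
    hfol₁.exists_isTransversal (hV.inter Metric.isOpen_ball) inter_subset_right hV₁
  obtain ⟨p, hp, hp'⟩ :=
    hd.inter_open_nonempty _ isOpen_interior (htr.nonempty_interior_endpoints hΛ)
  exact disjoint_left.mp hdisj (interior_subset hp) hp'

theorem two_dense_implies_totally_disconnected_general
    (Λ₁ Λ₂ : Set (Circle × Circle))
    (h₁ : IsLamination Λ₁) (h₂ : IsLamination Λ₂)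
    (hd₁ : DenseLam Λ₁) (hd₂ : DenseLam Λ₂)
    (hdisj : Disjoint {p : Circle | IsEndpoint Λ₁ p} {p : Circle | IsEndpoint Λ₂ p}) :
    TotallyDisconnectedLam Λ₁ ∧ TotallyDisconnectedLam Λ₂ :=
  ⟨h₁.totallyDisconnectedLam_of_dense_of_disjoint hd₂ hdisj,
    h₂.totallyDisconnectedLam_of_dense_of_disjoint hd₁ hdisj.symm⟩

/-- If a subgroup `G` of `Homeo⁺(S¹)` admits two dense invariant laminations with
disjoint endpoint sets, then each of the laminations is totally disconnected. -/
theorem two_dense_implies_totally_disconnected (G : Subgroup (Circle ≃ₜ Circle))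
    (hor : ∀ g ∈ G, ∃ F : ℝ → ℝ, StrictMono F ∧ ∀ x : ℝ, g (Circle.exp x) = Circle.exp (F x))
    (Λ₁ Λ₂ : Set (Circle × Circle))
    (h₁ : IsLamination Λ₁) (h₂ : IsLamination Λ₂)
    (hinv₁ : ∀ g ∈ G, ∀ l ∈ Λ₁, (g l.1, g l.2) ∈ Λ₁)
    (hinv₂ : ∀ g ∈ G, ∀ l ∈ Λ₂, (g l.1, g l.2) ∈ Λ₂)
    (hd₁ : DenseLam Λ₁) (hd₂ : DenseLam Λ₂)
    (hdisj : Disjoint {p : Circle | IsEndpoint Λ₁ p} {p : Circle | IsEndpoint Λ₂ p}) :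
    TotallyDisconnectedLam Λ₁ ∧ TotallyDisconnectedLam Λ₂ :=
  two_dense_implies_totally_disconnected_general Λ₁ Λ₂ h₁ h₂ hd₁ hd₂ hdisj
end
end

section
/- (Solodov) Let G ≤ Homeo⁺(ℝ) be a group such that every nontrivial element has at most one fixed point, and suppose G has no global fixed point. Then every nontrivial element of the commutator subgroup [G,G] acts on ℝ without fixed points. -/
open Filter Topology Set Function

theorem IsPreconnected.forall_lt_or_forall_gt {X α : Type*} [TopologicalSpace X] [LinearOrder α]
    [TopologicalSpace α] [OrderClosedTopology α] {s : Set X} (hs : IsPreconnected s) {f g : X → α}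
    (hf : ContinuousOn f s) (hg : ContinuousOn g s) (hne : ∀ x ∈ s, f x ≠ g x) :
    (∀ x ∈ s, f x < g x) ∨ ∀ x ∈ s, g x < f x := by
  by_contra! h
  obtain ⟨⟨a, ha, hga⟩, ⟨b, hb, hfb⟩⟩ := h
  obtain ⟨x, hx, hfg⟩ := hs.intermediate_value₂ hb ha hf hg hfb hga
  exact hne x hx hfg

theorem eventually_lt_or_eventually_gt_atTop {f g : ℝ → ℝ} (hf : Continuous f) (hg : Continuous g)
    (h : {x | f x = g x}.Subsingleton) :
    (∀ᶠ x in atTop, f x < g x) ∨ ∀ᶠ x in atTop, g x < f x := by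
  obtain ⟨p, hp⟩ : ∃ p, ∀ x ∈ Ioi p, f x ≠ g x := by
    rcases h.eq_empty_or_singleton with h | ⟨p, hp⟩
    · exact ⟨0, fun x _ hx => h.subset hx⟩
    · exact ⟨p, fun x hx hfx => (mem_Ioi.1 hx).ne' (hp.subset hfx)⟩
  exact (isPreconnected_Ioi.forall_lt_or_forall_gt hf.continuousOn hg.continuousOn hp).imp
    (fun h => (eventually_gt_atTop p).mono h) fun h => (eventually_gt_atTop p).mono h

theorem not_subsingleton_fixedPoints_of_lt_of_gt_of_lt {f : ℝ → ℝ} (hf : Continuous f)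
    {a b c : ℝ} (hab : a < b) (hbc : b < c) (ha : a < f a) (hb : f b < b) (hc : c < f c) :
    ¬ (fixedPoints f).Subsingleton := by
  intro h
  obtain ⟨x, hx, hfx⟩ := isPreconnected_Icc.intermediate_value₂ (left_mem_Icc.2 hab.le)
    (right_mem_Icc.2 hab.le) continuousOn_id hf.continuousOn ha.le hb.le
  obtain ⟨y, hy, hfy⟩ := isPreconnected_Icc.intermediate_value₂ (left_mem_Icc.2 hbc.le)
    (right_mem_Icc.2 hbc.le) hf.continuousOn continuousOn_id hb.le hc.le
  have hxy : x = y := h hfx.symm hfy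
  obtain rfl : x = b := le_antisymm hx.2 (hxy ▸ hy.1)
  exact hb.ne hfx.symm

section Orbits

variable {α : Type*} [ConditionallyCompleteLinearOrder α] [TopologicalSpace α] [OrderTopology α]
  {f : α → α}

theorem tendsto_iterate_atTop_of_forall_lt (hf : Continuous f) (hmono : Monotone f) {y : α}
    (hy : ∀ x, y ≤ x → x < f x) : Tendsto (fun n => f^[n] y) atTop atTop := by
  have horb : Monotone fun n => f^[n] y := hmono.monotone_iterate_of_le_map (hy y le_rfl).le
  refine (tendsto_atTop_of_monotone horb).resolve_right ?_
  rintro ⟨L, hL⟩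
  exact (hy L (horb.ge_of_tendsto hL 0)).ne' (isFixedPt_of_tendsto_iterate hL hf.continuousAt)

theorem tendsto_iterate_nhds_of_forall_lt (hf : Continuous f) (hmono : Monotone f) {p y : α}
    (hp : IsFixedPt f p) (hyp : y ≤ p) (hy : ∀ x ∈ Ico y p, x < f x) :
    Tendsto (fun n => f^[n] y) atTop (𝓝 p) := by
  have hfy : y ≤ f y := by
    rcases hyp.eq_or_lt with rfl | h
    · exact hp.ge
    · exact (hy y ⟨le_rfl, h⟩).le
  have horb : Monotone fun n => f^[n] y := hmono.monotone_iterate_of_le_map hfy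
  have hbdd : ∀ n, f^[n] y ≤ p := fun n => (hmono.iterate n hyp).trans_eq (hp.iterate n)
  have hL := tendsto_atTop_ciSup horb ⟨p, forall_mem_range.2 hbdd⟩
  have hLp : ⨆ n, f^[n] y ≤ p := ciSup_le hbdd
  obtain h | h := hLp.eq_or_lt
  · rwa [h] at hL
  · exact absurd (isFixedPt_of_tendsto_iterate hL hf.continuousAt)
      (hy _ ⟨horb.ge_of_tendsto hL 0, h⟩).ne'

end Orbits

theorem Homeomorph.pow_apply_eq_iterate {X : Type*} [TopologicalSpace X] (g : X ≃ₜ X) (n : ℕ)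
    (x : X) : (g ^ n) x = g^[n] x := by
  induction n generalizing x with
  | zero => rfl
  | succ n ih => rw [pow_succ, iterate_succ_apply, ← ih]; rfl

theorem Homeomorph.lt_inv_apply_of_apply_lt {X : Type*} [TopologicalSpace X] [LinearOrder X]
    {g : X ≃ₜ X} (hg : Monotone g) {x : X} (h : g x < x) : x < g⁻¹ x := by
  by_contra! h'
  exact (hg h').not_gt (by rwa [show g (g⁻¹ x) = x from g.apply_symm_apply x])

theorem Int.exists_tendsto_div_of_superadditive {a : ℕ → ℤ}
    (hsuper : ∀ m n, a m + a n ≤ a (m + n)) (hsub : ∀ m n, a (m + n) ≤ a m + a n + 1) :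
    ∃ L, Tendsto (fun n => (a n : ℝ) / n) atTop (𝓝 L) := by
  have hneg : Subadditive fun n => -(a n : ℝ) := fun m n => by
    have := hsuper m n
    simp only [← Int.cast_neg, ← Int.cast_add]
    exact_mod_cast (by omega : -a (m + n) ≤ -a m + -a n)
  have hlin : ∀ n : ℕ, a n ≤ n * (a 1 + 1) := by
    intro n
    induction n with
    | zero =>
      have := hsuper 0 0
      rw [add_zero] at this
      simp only [CharP.cast_eq_zero, zero_mul]
      omega
    | succ n ih => have := hsub n 1; push_cast; nlinarith
  have hbdd : BddBelow (Set.range fun n => -(a n : ℝ) / n) := by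
    refine ⟨-(|(a 1 : ℝ)| + 1), ?_⟩
    rintro _ ⟨n, rfl⟩
    rcases Nat.eq_zero_or_pos n with rfl | hn
    · simp only [CharP.cast_eq_zero, div_zero, neg_nonpos]
      positivity
    · have hn' : (0 : ℝ) < n := by exact_mod_cast hn
      have : (a n : ℝ) ≤ n * (a 1 + 1) := by exact_mod_cast hlin n
      rw [le_div_iff₀ hn']
      nlinarith [le_abs_self (a 1 : ℝ)]
  refine ⟨-hneg.lim, ?_⟩
  simpa [neg_div] using (hneg.tendsto_lim hbdd).neg

section BiOrderedGroup

variable {α : Type*} [Group α] [LinearOrder α] [MulLeftMono α] {c : α}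

theorem zpow_strictMono_of_one_lt (hc : 1 < c) : StrictMono fun n : ℤ => c ^ n :=
  strictMono_int_of_lt_succ fun n => by
    rw [zpow_add_one]
    exact lt_mul_of_one_lt_right' _ hc

variable [MulRightMono α]

theorem pow_mul_le_mul_pow_of_mul_le {a b : α} (h : b * a ≤ a * b) (n : ℕ) :
    b ^ n * a ≤ a * b ^ n := by
  induction n with
  | zero => simp
  | succ n ih =>
    calc b ^ (n + 1) * a = b ^ n * (b * a) := by rw [pow_succ, mul_assoc]
      _ ≤ b ^ n * (a * b) := mul_le_mul_right h _
      _ = b ^ n * a * b := (mul_assoc _ _ _).symm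
      _ ≤ a * b ^ n * b := mul_le_mul_left ih _
      _ = a * b ^ (n + 1) := by rw [pow_succ, mul_assoc]

theorem mul_pow_le_pow_mul_pow_of_mul_le {a b : α} (h : b * a ≤ a * b) (n : ℕ) :
    (a * b) ^ n ≤ a ^ n * b ^ n := by
  induction n with
  | zero => simp
  | succ n ih =>
    calc (a * b) ^ (n + 1) = (a * b) ^ n * (a * b) := pow_succ _ _
      _ ≤ a ^ n * b ^ n * (a * b) := mul_le_mul_left ih _
      _ = a ^ n * (b ^ n * a) * b := by simp only [mul_assoc]
      _ ≤ a ^ n * (a * b ^ n) * b :=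
          mul_le_mul_left (mul_le_mul_right (pow_mul_le_mul_pow_of_mul_le h n) _) _
      _ = a ^ (n + 1) * b ^ (n + 1) := by simp only [pow_succ, mul_assoc]

theorem pow_mul_pow_le_mul_pow_of_mul_le {a b : α} (h : b * a ≤ a * b) (n : ℕ) :
    b ^ n * a ^ n ≤ (a * b) ^ n := by
  induction n with
  | zero => simp
  | succ n ih =>
    calc b ^ (n + 1) * a ^ (n + 1) = b * (b ^ n * a ^ n) * a := by
          rw [pow_succ', pow_succ]; group
      _ ≤ b * (a * b) ^ n * a := mul_le_mul_left (mul_le_mul_right ih _) _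
      _ = (b * a) ^ (n + 1) := by rw [mul_assoc, mul_pow_mul, pow_succ', mul_assoc]
      _ ≤ (a * b) ^ (n + 1) := pow_le_pow_left' h _

theorem mul_pow_mem_uIcc (a b : α) (n : ℕ) :
    (a * b) ^ n ∈ uIcc (a ^ n * b ^ n) (b ^ n * a ^ n) := by
  rcases le_total (b * a) (a * b) with h | h
  · rw [uIcc_comm]
    exact Icc_subset_uIcc
      ⟨pow_mul_pow_le_mul_pow_of_mul_le h n, mul_pow_le_pow_mul_pow_of_mul_le h n⟩
  -- the case `a * b ≤ b * a` is the first one in the order dual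
  · exact Icc_subset_uIcc
      ⟨mul_pow_le_pow_mul_pow_of_mul_le (a := OrderDual.toDual a) (b := OrderDual.toDual b) h n,
        pow_mul_pow_le_mul_pow_of_mul_le (a := OrderDual.toDual a) (b := OrderDual.toDual b) h n⟩

-- `sSup` and `limUnder` below give junk values unless `1 < c` and `c` is cofinal.
noncomputable def zpowFloor (c g : α) : ℤ := sSup {n : ℤ | c ^ n ≤ g}

noncomputable def translationNumber (c g : α) : ℝ :=
  limUnder atTop fun n : ℕ => (zpowFloor c (g ^ n) : ℝ) / n

section Cofinal

variable (hc : 1 < c) (hcof : ∀ g : α, ∃ n : ℕ, g ≤ c ^ n)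
include hc hcof

theorem le_zpowFloor_iff {g : α} {n : ℤ} : n ≤ zpowFloor c g ↔ c ^ n ≤ g := by
  have hbdd : BddAbove {n : ℤ | c ^ n ≤ g} := by
    obtain ⟨N, hN⟩ := hcof g
    refine ⟨N, fun m hm => (zpow_strictMono_of_one_lt hc).le_iff_le.1 ?_⟩
    simpa using hm.trans hN
  have hne : {n : ℤ | c ^ n ≤ g}.Nonempty := by
    obtain ⟨N, hN⟩ := hcof g⁻¹
    exact ⟨-N, by simpa [inv_le'] using hN⟩
  refine ⟨fun h => ?_, fun h => le_csSup hbdd h⟩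
  exact ((zpow_strictMono_of_one_lt hc).monotone h).trans (Int.csSup_mem hne hbdd)

theorem zpow_zpowFloor_le (g : α) : c ^ zpowFloor c g ≤ g :=
  (le_zpowFloor_iff hc hcof).1 le_rfl

theorem lt_zpow_zpowFloor_add_one (g : α) : g < c ^ (zpowFloor c g + 1) := by
  by_contra! h
  exact (lt_add_one _).not_ge ((le_zpowFloor_iff hc hcof).2 h)

theorem zpowFloor_mono : Monotone (zpowFloor c) := fun _ _ hgh =>
  (le_zpowFloor_iff hc hcof).2 ((zpow_zpowFloor_le hc hcof _).trans hgh)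

theorem zpowFloor_zpow (n : ℤ) : zpowFloor c (c ^ n) = n :=
  le_antisymm ((zpow_strictMono_of_one_lt hc).le_iff_le.1 (zpow_zpowFloor_le hc hcof _))
    ((le_zpowFloor_iff hc hcof).2 le_rfl)

theorem zpowFloor_add_le (g h : α) : zpowFloor c g + zpowFloor c h ≤ zpowFloor c (g * h) :=
  (le_zpowFloor_iff hc hcof).2 <| by
    rw [zpow_add]
    exact mul_le_mul' (zpow_zpowFloor_le hc hcof g) (zpow_zpowFloor_le hc hcof h)

theorem zpowFloor_mul_le (g h : α) : zpowFloor c (g * h) ≤ zpowFloor c g + zpowFloor c h + 1 := by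
  have hlt : g * h < c ^ (zpowFloor c g + zpowFloor c h + 2) := by
    calc g * h < c ^ (zpowFloor c g + 1) * c ^ (zpowFloor c h + 1) :=
          mul_lt_mul_of_lt_of_lt (lt_zpow_zpowFloor_add_one hc hcof g)
            (lt_zpow_zpowFloor_add_one hc hcof h)
      _ = c ^ (zpowFloor c g + zpowFloor c h + 2) := by rw [← zpow_add]; ring_nf
  by_contra! h'
  exact hlt.not_ge ((le_zpowFloor_iff hc hcof).1 (by omega))

theorem tendsto_translationNumber (g : α) :
    Tendsto (fun n : ℕ => (zpowFloor c (g ^ n) : ℝ) / n) atTop (𝓝 (translationNumber c g)) :=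
  tendsto_nhds_limUnder <| Int.exists_tendsto_div_of_superadditive
    (fun m n => pow_add g m n ▸ zpowFloor_add_le hc hcof _ _)
    (fun m n => pow_add g m n ▸ zpowFloor_mul_le hc hcof _ _)

theorem translationNumber_self : translationNumber c c = 1 := by
  refine tendsto_nhds_unique (tendsto_translationNumber hc hcof c) ?_
  refine tendsto_const_nhds.congr' ?_
  filter_upwards [eventually_ne_atTop 0] with n hn
  rw [← zpow_natCast, zpowFloor_zpow hc hcof, Int.cast_natCast, div_self (Nat.cast_ne_zero.2 hn)]

theorem translationNumber_mul (g h : α) :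
    translationNumber c (g * h) = translationNumber c g + translationNumber c h := by
  set e : ℕ → ℤ := fun n => zpowFloor c ((g * h) ^ n) - zpowFloor c (g ^ n) - zpowFloor c (h ^ n)
  have he : ∀ n, 0 ≤ e n ∧ e n ≤ 1 := by
    intro n
    simp only [e]
    have := zpowFloor_add_le hc hcof (g ^ n) (h ^ n)
    have := zpowFloor_add_le hc hcof (h ^ n) (g ^ n)
    have := zpowFloor_mul_le hc hcof (g ^ n) (h ^ n)
    have := zpowFloor_mul_le hc hcof (h ^ n) (g ^ n)
    rcases mem_uIcc.1 (mul_pow_mem_uIcc g h n) with ⟨h₁, h₂⟩ | ⟨h₁, h₂⟩ <;>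
      have := zpowFloor_mono hc hcof h₁ <;> have := zpowFloor_mono hc hcof h₂ <;> omega
  have hd : Tendsto (fun n : ℕ => (e n : ℝ) / n) atTop (𝓝 0) := by
    refine tendsto_of_tendsto_of_tendsto_of_le_of_le tendsto_const_nhds
      (tendsto_one_div_atTop_nhds_zero_nat (𝕜 := ℝ)) (fun n => ?_) (fun n => ?_)
    · exact div_nonneg (Int.cast_nonneg (he n).1) n.cast_nonneg
    · exact div_le_div_of_nonneg_right
        ((Int.cast_le (R := ℝ)).2 (he n).2 |>.trans_eq Int.cast_one) n.cast_nonneg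
  have hd' : Tendsto (fun n : ℕ => (e n : ℝ) / n) atTop
      (𝓝 (translationNumber c (g * h) - translationNumber c g - translationNumber c h)) := by
    refine (((tendsto_translationNumber hc hcof _).sub (tendsto_translationNumber hc hcof g)).sub
      (tendsto_translationNumber hc hcof h)).congr fun n => ?_
    simp only [e]
    push_cast
    ring
  linarith [tendsto_nhds_unique hd' hd]

noncomputable def translationNumberHom : α →* Multiplicative ℝ :=
  MonoidHom.mk' (fun g => Multiplicative.ofAdd (translationNumber c g)) fun g h => by
    rw [translationNumber_mul hc hcof, ofAdd_add]

theorem notMem_commutator_of_forall_le_pow : c ∉ commutator α := fun hmem => by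
  have h := Abelianization.commutator_subset_ker (translationNumberHom hc hcof) hmem
  rw [MonoidHom.mem_ker] at h
  have : translationNumber c c = 0 := congrArg Multiplicative.toAdd h
  rw [translationNumber_self hc hcof] at this
  exact one_ne_zero this

end Cofinal

end BiOrderedGroup

section SubgroupOfHomeomorphisms

variable {G : Subgroup (ℝ ≃ₜ ℝ)} (hmono : ∀ g ∈ G, Monotone (⇑g))
  (hone : ∀ g ∈ G, g ≠ 1 → {x : ℝ | g x = x}.Subsingleton)

include hone in
theorem subsingleton_setOf_apply_eq {f g : ℝ ≃ₜ ℝ} (hf : f ∈ G) (hg : g ∈ G) (hfg : f ≠ g) :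
    {x | f x = g x}.Subsingleton := by
  have h := hone (g⁻¹ * f) (mul_mem (inv_mem hg) hf) (by rwa [Ne, inv_mul_eq_one, eq_comm])
  intro x hx y hy
  exact h (g.symm_apply_eq.2 hx) (g.symm_apply_eq.2 hy)

noncomputable abbrev germOrder : LinearOrder G where
  le f g := ∀ᶠ x in atTop, (f : ℝ ≃ₜ ℝ) x ≤ (g : ℝ ≃ₜ ℝ) x
  le_refl _ := Eventually.of_forall fun _ => le_rfl
  le_trans _ _ _ hfg hgh := (hfg.and hgh).mono fun _ h => h.1.trans h.2
  le_antisymm f g hfg hgf := by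
    by_contra hne
    have h := subsingleton_setOf_apply_eq hone f.2 g.2 (Subtype.coe_injective.ne hne)
    obtain ⟨a, ha⟩ := ((hfg.and hgf).mono fun _ h => le_antisymm h.1 h.2).exists_forall_of_atTop
    have : a = a + 1 := h (ha a le_rfl) (ha (a + 1) (by linarith))
    linarith
  le_total f g := by
    by_cases hfg : f = g
    · exact Or.inl (hfg ▸ Eventually.of_forall fun _ => le_rfl)
    · exact (eventually_lt_or_eventually_gt_atTop (f : ℝ ≃ₜ ℝ).continuous (g : ℝ ≃ₜ ℝ).continuous
        (subsingleton_setOf_apply_eq hone f.2 g.2 (Subtype.coe_injective.ne hfg))).imp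
        (fun h => h.mono fun _ => le_of_lt) fun h => h.mono fun _ => le_of_lt
  toDecidableLE := Classical.decRel _

include hmono in
theorem tendsto_atTop_atTop_of_mem {g : ℝ ≃ₜ ℝ} (hg : g ∈ G) : Tendsto g atTop atTop :=
  tendsto_atTop_atTop_of_monotone (hmono g hg) fun b => ⟨g.symm b, (g.apply_symm_apply b).ge⟩

include hmono in
theorem mulLeftMono_germOrder : letI := germOrder hone; MulLeftMono G :=
  letI := germOrder hone
  ⟨fun u _ _ h => (h : ∀ᶠ _ in atTop, _).mono fun _ hx => hmono u u.2 hx⟩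

include hmono in
theorem mulRightMono_germOrder : letI := germOrder hone; MulRightMono G :=
  letI := germOrder hone
  ⟨fun v _ _ h => (tendsto_atTop_atTop_of_mem hmono v.2).eventually (h : ∀ᶠ _ in atTop, _)⟩

include hmono hone in
theorem exists_eventually_le_pow_of_repelling {c : ℝ ≃ₜ ℝ} (hc : c ∈ G) {p : ℝ} (hp : c p = p)
    (hbelow : ∀ x < p, c x < x) (habove : ∀ x, p < x → x < c x) {g : ℝ ≃ₜ ℝ} (hg : g ∈ G) :
    ∃ n : ℕ, ∀ᶠ x in atTop, g x ≤ (c ^ n) x := by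
  by_contra hcon
  -- otherwise, for large `n`, `c⁻ⁿ g` moves `y₀` right, `p + 1` left and all large points right
  set y₀ := min (p - 1) (g⁻¹ (p - 1))
  have hgy₀ : g y₀ ≤ p - 1 :=
    (hmono g hg (min_le_right _ _)).trans_eq (g.apply_symm_apply (p - 1))
  have h₀ : ∀ᶠ n : ℕ in atTop, y₀ < (c⁻¹ ^ n) (g y₀) := by
    simp only [Homeomorph.pow_apply_eq_iterate]
    refine (tendsto_iterate_nhds_of_forall_lt (c⁻¹).continuous (hmono _ (inv_mem hc))
      (c.symm_apply_eq.2 hp.symm) (by linarith) fun x hx => ?_).eventually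
      (eventually_gt_nhds (by linarith [min_le_left (p - 1) (g⁻¹ (p - 1))]))
    exact Homeomorph.lt_inv_apply_of_apply_lt (hmono c hc) (hbelow x hx.2)
  have h₁ : ∀ᶠ n : ℕ in atTop, g (p + 1) < (c ^ n) (p + 1) := by
    simp only [Homeomorph.pow_apply_eq_iterate]
    exact (tendsto_iterate_atTop_of_forall_lt c.continuous (hmono c hc)
      fun x hx => habove x (by linarith)).eventually_gt_atTop _
  obtain ⟨n, hn₀, hn₁⟩ := (h₀.and h₁).exists
  set T := c⁻¹ ^ n * g
  have hT : T ∈ G := mul_mem (pow_mem (inv_mem hc) n) hg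
  have hcT : ∀ x, (c ^ n) (T x) = g x := fun x => by
    show (c ^ n) ((c⁻¹ ^ n) (g x)) = g x
    rw [inv_pow]
    exact (c ^ n).apply_symm_apply (g x)
  have hT₁ : T (p + 1) < p + 1 :=
    ((hmono _ (pow_mem hc n)).strictMono_of_injective (c ^ n).injective).lt_iff_lt.1
      ((hcT _).trans_lt hn₁)
  have hT1 : T ≠ 1 := fun h => hT₁.ne (by rw [h]; rfl)
  rcases eventually_lt_or_eventually_gt_atTop T.continuous continuous_id (hone T hT hT1) with h | h
  · exact hcon ⟨n, h.mono fun x hx => hcT x ▸ hmono _ (pow_mem hc n) hx.le⟩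
  · obtain ⟨y₂, hy₂, hy₂'⟩ := (h.and (eventually_gt_atTop (p + 1))).exists
    exact not_subsingleton_fixedPoints_of_lt_of_gt_of_lt T.continuous
      (by linarith [min_le_left (p - 1) (g⁻¹ (p - 1))]) hy₂' hn₀ hT₁ hy₂ (hone T hT hT1)

include hmono hone in
theorem notMem_commutator_of_repelling {c : ℝ ≃ₜ ℝ} (hc : c ∈ G) {p : ℝ} (hp : c p = p)
    (hbelow : ∀ x < p, c x < x) (habove : ∀ x, p < x → x < c x) : c ∉ ⁅G, G⁆ := by
  let _ := germOrder hone
  have := mulLeftMono_germOrder hmono hone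
  have := mulRightMono_germOrder hmono hone
  rw [← G.map_subtype_commutator]
  rintro ⟨c, hcomm, rfl⟩
  refine notMem_commutator_of_forall_le_pow ?_ (fun g => ?_) hcomm
  · refine lt_of_le_not_ge ((eventually_gt_atTop p).mono fun x hx => (habove x hx).le) fun h => ?_
    obtain ⟨x, hx, hx'⟩ := ((h : ∀ᶠ _ in atTop, _).and (eventually_gt_atTop p)).exists
    exact (habove x hx').not_ge hx
  · exact exists_eventually_le_pow_of_repelling hmono hone c.2 hp hbelow habove g.2

include hmono in
theorem exists_mem_apply_lt (hglobal : ¬ ∃ x : ℝ, ∀ g ∈ G, g x = x) (p : ℝ) :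
    ∃ ρ ∈ G, ρ p < p := by
  obtain ⟨g, hg, hgp⟩ : ∃ g ∈ G, g p ≠ p := by
    by_contra! h
    exact hglobal ⟨p, h⟩
  rcases hgp.lt_or_gt with h | h
  · exact ⟨g, hg, h⟩
  · refine ⟨g⁻¹, inv_mem hg, lt_of_not_ge fun h' => ?_⟩
    exact (hmono g hg h').not_gt (by rwa [show g (g⁻¹ p) = p from g.apply_symm_apply p])

include hmono hone in
theorem not_forall_lt_apply_of_apply_eq (hglobal : ¬ ∃ x : ℝ, ∀ g ∈ G, g x = x) {g : ℝ ≃ₜ ℝ}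
    (hg : g ∈ G) {p : ℝ} (hp : g p = p) : ¬ ∀ x ≠ p, x < g x := by
  intro hlt
  obtain ⟨ρ, hρ, hρp⟩ := exists_mem_apply_lt hmono hglobal p
  have h₀ : ∀ᶠ n : ℕ in atTop, ρ p - 1 < ρ ((g ^ n) (ρ p - 1)) := by
    simp only [Homeomorph.pow_apply_eq_iterate]
    exact ((ρ.continuous.tendsto p).comp (tendsto_iterate_nhds_of_forall_lt g.continuous
      (hmono g hg) hp (by linarith) fun x hx => hlt x hx.2.ne)).eventually
      (eventually_gt_nhds (by linarith))
  have h₁ : ∀ᶠ n : ℕ in atTop, p + 1 < ρ ((g ^ n) (p + 1)) := by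
    simp only [Homeomorph.pow_apply_eq_iterate]
    exact ((tendsto_atTop_atTop_of_mem hmono hρ).comp (tendsto_iterate_atTop_of_forall_lt
      g.continuous (hmono g hg) fun x hx => hlt x (by linarith))).eventually_gt_atTop _
  obtain ⟨n, hn₀, hn₁⟩ := (h₀.and h₁).exists
  set T := ρ * g ^ n
  have hT : T ∈ G := mul_mem hρ (pow_mem hg n)
  have hTp : T p < p := by
    show ρ ((g ^ n) p) < p
    rwa [Homeomorph.pow_apply_eq_iterate, iterate_fixed hp]
  have hT1 : T ≠ 1 := fun h => hTp.ne (by rw [h]; rfl)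
  exact not_subsingleton_fixedPoints_of_lt_of_gt_of_lt T.continuous (by linarith : ρ p - 1 < p)
    (lt_add_one p) hn₀ hTp hn₁ (hone T hT hT1)

include hmono hone in
theorem not_forall_lt_apply_of_mem_commutator (hglobal : ¬ ∃ x : ℝ, ∀ g ∈ G, g x = x)
    {g : ℝ ≃ₜ ℝ} (hg : g ∈ ⁅G, G⁆) (hg1 : g ≠ 1) {p : ℝ} (hp : g p = p) :
    ¬ ∀ x, p < x → x < g x := by
  intro habove
  have hgG : g ∈ G := G.commutator_le_self hg
  have hfree : ∀ x ∈ Iio p, x ≠ g x := fun x hx hgx =>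
    (mem_Iio.1 hx).ne (hone g hgG hg1 hgx.symm hp)
  rcases isPreconnected_Iio.forall_lt_or_forall_gt continuousOn_id g.continuous.continuousOn hfree
    with hbelow | hbelow
  · exact not_forall_lt_apply_of_apply_eq hmono hone hglobal hgG hp fun x hx =>
      hx.lt_or_gt.elim (hbelow x) (habove x)
  · exact notMem_commutator_of_repelling hmono hone hgG hp hbelow habove hg

end SubgroupOfHomeomorphisms

/-- Solodov's theorem: if `G ≤ Homeo⁺(ℝ)` is such that every nontrivial element has at
most one fixed point and there is no global fixed point, then every nontrivial element
of the commutator subgroup `[G,G]` acts on `ℝ` without fixed points. -/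
theorem solodov (G : Subgroup (ℝ ≃ₜ ℝ))
    (hmono : ∀ g ∈ G, Monotone (⇑g))
    (hone : ∀ g ∈ G, g ≠ 1 → {x : ℝ | g x = x}.Subsingleton)
    (hglobal : ¬ ∃ x : ℝ, ∀ g ∈ G, g x = x) :
    ∀ g ∈ ⁅G, G⁆, g ≠ 1 → ∀ x : ℝ, g x ≠ x := by
  intro g hg hg1 x hx
  have hgG : g ∈ G := G.commutator_le_self hg
  have hfree : ∀ y ∈ Ioi x, y ≠ g y := fun y hy hgy =>
    (mem_Ioi.1 hy).ne' (hone g hgG hg1 hgy.symm hx)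
  rcases isPreconnected_Ioi.forall_lt_or_forall_gt continuousOn_id g.continuous.continuousOn hfree
    with habove | habove
  · exact not_forall_lt_apply_of_mem_commutator hmono hone hglobal hg hg1 hx habove
  · exact not_forall_lt_apply_of_mem_commutator hmono hone hglobal (inv_mem hg) (inv_ne_one.2 hg1)
      (g.symm_apply_eq.2 hx.symm) fun y hy => Homeomorph.lt_inv_apply_of_apply_lt (hmono g hgG)
        (habove y hy)
end

section
/- Let G ≤ Homeo⁺(S¹) be a group of orientation-preserving circle homeomorphisms such that every nontrivial element has at most two fixed points, and suppose two nontrivial elements g, h ∈ G each have exactly two fixed points and share a fixed point p. If moreover every nontrivial element of the subgroup H = ⟨g, h⟩ fixes p and has exactly two fixed points, then H has a second global fixed point: there is q ≠ p fixed by every element of H, and Fix(k) = {p, q} for every nontrivial k ∈ H. -/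
/-
Cut the circle open at `p`: through the chart `x ↦ exp (ix)` on `(arg p, arg p + 2π)`, the group
`H = ⟨g, h⟩` becomes a group of homeomorphisms of an interval, increasing since they preserve
orientation, in which every nontrivial element has exactly one fixed point; a common fixed point
there is the point `q`.

Suppose there is none. A nontrivial element cannot move all other points in one direction: its
product with a conjugate moving its fixed point would have no fixed point. So each nontrivial
element or its inverse repels every point from its fixed point. Repelling elements are closed under
products and conjugation, hence form the positive cone of a bi-invariant order on `H`; this order is
archimedean because the iterates of a repelling element push points to the ends of the interval.
By Hölder's theorem `H` is abelian, and commuting elements share their fixed point.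
-/

open Set

noncomputable section

/-- A homeomorphism of the circle is orientation preserving if it admits a strictly
increasing lift to the real line through the universal covering `Circle.exp`. -/
def OrientationPreserving (f : Circle ≃ₜ Circle) : Prop :=
  ∃ F : ℝ → ℝ, StrictMono F ∧ ∀ x : ℝ, f (Circle.exp x) = Circle.exp (F x)

/-- The fixed point set of a circle homeomorphism. -/
def FixSet (f : Circle ≃ₜ Circle) : Set Circle := {x | f x = x}

open Filter Topology Real

section OrderTopology

variable {α : Type*} [ConditionallyCompleteLinearOrder α] [TopologicalSpace α] [OrderTopology α]

theorem exists_mem_uIcc_apply_eq [DenselyOrdered α] {f : α → α} {x y : α}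
    (hf : ContinuousOn f (uIcc x y)) (hx : f x ≤ x) (hy : y ≤ f y) : ∃ c ∈ uIcc x y, f c = c :=
  isPreconnected_uIcc.intermediate_value₂ left_mem_uIcc right_mem_uIcc hf continuousOn_id hx hy

theorem eventually_iterate_lt {f : α → α} {a x z : α} (hax : a < x) (haz : a < z)
    (hf : ∀ w ∈ Ioc a z, a < f w ∧ f w < w) (hcont : ContinuousOn f (Ioc a z)) :
    ∀ᶠ n in atTop, f^[n] z < x := by
  have hmem : ∀ n, f^[n] z ∈ Ioc a z := by
    intro n
    induction n with
    | zero => exact ⟨haz, le_rfl⟩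
    | succ n ih =>
      rw [Function.iterate_succ_apply']
      exact ⟨(hf _ ih).1, (hf _ ih).2.le.trans ih.2⟩
  have hanti : Antitone fun n => f^[n] z := antitone_nat_of_succ_le fun n => by
    rw [Function.iterate_succ_apply']
    exact (hf _ (hmem n)).2.le
  have htend := tendsto_atTop_ciInf hanti ⟨a, by rintro _ ⟨n, rfl⟩; exact (hmem n).1.le⟩
  set L := ⨅ n, f^[n] z
  suffices hL : L < x from htend.eventually (gt_mem_nhds hL)
  by_contra! hxL
  have hLmem : L ∈ Ioc a z := ⟨hax.trans_le hxL, ciInf_le_of_le ⟨a, by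
    rintro _ ⟨n, rfl⟩; exact (hmem n).1.le⟩ 0 le_rfl⟩
  have hfix : f L = L := by
    have h1 : Tendsto (fun n => f (f^[n] z)) atTop (𝓝 (f L)) :=
      (hcont L hLmem).tendsto.comp (tendsto_nhdsWithin_iff.2 ⟨htend, .of_forall hmem⟩)
    have h2 : Tendsto (fun n => f (f^[n] z)) atTop (𝓝 L) := by
      simpa only [Function.comp_def, Function.iterate_succ_apply'] using
        htend.comp (tendsto_add_atTop_nat 1)
    exact tendsto_nhds_unique h1 h2
  exact (hf L hLmem).2.ne hfix

theorem eventually_lt_iterate {f : α → α} {b x z : α} (hxb : x < b) (hzb : z < b)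
    (hf : ∀ w ∈ Ico z b, w < f w ∧ f w < b) (hcont : ContinuousOn f (Ico z b)) :
    ∀ᶠ n in atTop, x < f^[n] z :=
  eventually_iterate_lt (α := αᵒᵈ) hxb hzb (fun w hw => (hf w ⟨hw.2, hw.1⟩).symm)
    (hcont.mono fun _ hw => ⟨hw.2, hw.1⟩)

end OrderTopology

theorem exists_pow_le_lt_pow_succ {M : Type*} [Monoid M] [LinearOrder M] {a δ : M}
    (ha : 1 ≤ a) (hex : ∃ n : ℕ, a < δ ^ n) : ∃ m : ℕ, δ ^ m ≤ a ∧ a < δ ^ (m + 1) := by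
  classical
  obtain ⟨m, hm⟩ : ∃ m, Nat.find hex = m + 1 :=
    Nat.exists_eq_succ_of_ne_zero fun h0 => (Nat.find_spec hex).not_ge (by simpa [h0] using ha)
  exact ⟨m, not_lt.1 (Nat.find_min hex (by omega)), hm ▸ Nat.find_spec hex⟩

section ArchimedeanGroup

variable {G : Type*} [Group G] [LinearOrder G] [MulLeftMono G] [MulRightMono G]

theorem exists_one_lt_sq_le {δ ε : G} (hδ : 1 < δ) (hδε : δ < ε) : ∃ μ, 1 < μ ∧ μ ^ 2 ≤ ε :=
  ⟨min δ (ε * δ⁻¹), lt_min hδ (lt_mul_inv_iff_mul_lt.2 (by simpa using hδε)), by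
    simpa [sq] using mul_le_mul' (min_le_right δ (ε * δ⁻¹)) (min_le_left δ (ε * δ⁻¹))⟩

-- Hölder's theorem
theorem commute_of_forall_lt_pow (harch : ∀ a δ : G, 1 < δ → ∃ n : ℕ, a < δ ^ n) (a b : G) :
    Commute a b := by
  suffices key : ∀ a b : G, 1 ≤ a → 1 ≤ b → ¬ b * a < a * b by
    have pos : ∀ a b : G, 1 ≤ a → 1 ≤ b → Commute a b := fun a b ha hb =>
      le_antisymm (not_lt.1 (key a b ha hb)) (not_lt.1 (key b a hb ha))
    rcases le_total 1 a with ha | ha <;> rcases le_total 1 b with hb | hb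
    · exact pos a b ha hb
    · exact Commute.inv_right_iff.1 (pos a b⁻¹ ha (one_le_inv'.2 hb))
    · exact Commute.inv_left_iff.1 (pos a⁻¹ b (one_le_inv'.2 ha) hb)
    · exact Commute.inv_inv_iff.1 (pos a⁻¹ b⁻¹ (one_le_inv'.2 ha) (one_le_inv'.2 hb))
  intro a b ha hb hlt
  set ε := (b * a)⁻¹ * (a * b)
  have hε : 1 < ε := lt_inv_mul_iff_mul_lt.2 (by simpa using hlt)
  by_cases hdense : ∃ δ, 1 < δ ∧ δ < ε
  · obtain ⟨δ, hδ, hδε⟩ := hdense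
    obtain ⟨μ, hμ, hμε⟩ := exists_one_lt_sq_le hδ hδε
    obtain ⟨m, ham, ham'⟩ := exists_pow_le_lt_pow_succ ha (harch a μ hμ)
    obtain ⟨n, hbn, hbn'⟩ := exists_pow_le_lt_pow_succ hb (harch b μ hμ)
    have upper : a * b < μ ^ (n + m) * μ ^ 2 := by
      calc a * b < μ ^ (m + 1) * μ ^ (n + 1) := mul_lt_mul_of_lt_of_lt ham' hbn'
        _ = μ ^ (n + m) * μ ^ 2 := by rw [← pow_add, ← pow_add]; ring_nf
    have lower : μ ^ (n + m) * μ ^ 2 ≤ a * b := by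
      calc μ ^ (n + m) * μ ^ 2 ≤ b * a * ε := by
            rw [pow_add]; exact mul_le_mul' (mul_le_mul' hbn ham) hμε
        _ = a * b := by simp [ε, mul_assoc]
    exact (upper.trans_le lower).false
  · push Not at hdense
    have hpow : ∀ c, 1 ≤ c → ∃ m : ℕ, c = ε ^ m := by
      intro c hc
      obtain ⟨m, hcm, hcm'⟩ := exists_pow_le_lt_pow_succ hc (harch c ε hε)
      refine ⟨m, (eq_of_le_of_not_lt hcm fun h => ?_).symm⟩
      refine (hdense ((ε ^ m)⁻¹ * c) (lt_inv_mul_iff_mul_lt.2 (by simpa using h))).not_gt ?_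
      exact inv_mul_lt_iff_lt_mul.2 (by rwa [← pow_succ])
    obtain ⟨m, hm⟩ := hpow a ha
    obtain ⟨n, hn⟩ := hpow b hb
    exact hlt.ne (by rw [hm, hn]; exact (Commute.pow_pow_self ε n m).eq)

end ArchimedeanGroup

def HasRepellingFixedPt {α : Type*} [LinearOrder α] (f : α → α) (s : Set α) : Prop :=
  ∃ c ∈ s, f c = c ∧ ∀ x ∈ s, (x < c → f x < x) ∧ (c < x → x < f x)

def HasUniqueFixedPt {K α : Type*} [One K] (T : K → α → α) (s : Set α) : Prop :=
  ∀ k : K, k ≠ 1 → ∃! x, x ∈ s ∧ T k x = x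

structure IsIntervalAction {K α : Type*} [Group K] [Preorder α] [TopologicalSpace α]
    (T : K → α → α) (A B : α) : Prop where
  mapsTo : ∀ k, MapsTo (T k) (Ioo A B) (Ioo A B)
  strictMonoOn : ∀ k, StrictMonoOn (T k) (Ioo A B)
  continuousOn : ∀ k, ContinuousOn (T k) (Ioo A B)
  one_apply : ∀ x ∈ Ioo A B, T 1 x = x
  mul_apply : ∀ k l, ∀ x ∈ Ioo A B, T (k * l) x = T k (T l x)

namespace IsIntervalAction

section LinearOrder

variable {K α : Type*} [Group K] [LinearOrder α] [TopologicalSpace α] {T : K → α → α}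
  {A B x y c : α} {k l : K}

theorem inv_apply_apply (hT : IsIntervalAction T A B) (hx : x ∈ Ioo A B) : T k⁻¹ (T k x) = x := by
  rw [← hT.mul_apply _ _ _ hx, inv_mul_cancel, hT.one_apply _ hx]

theorem apply_inv_apply (hT : IsIntervalAction T A B) (hx : x ∈ Ioo A B) : T k (T k⁻¹ x) = x := by
  rw [← hT.mul_apply _ _ _ hx, mul_inv_cancel, hT.one_apply _ hx]

theorem inv_apply_lt_iff (hT : IsIntervalAction T A B) (hx : x ∈ Ioo A B) (hy : y ∈ Ioo A B) :
    T k⁻¹ x < y ↔ x < T k y := by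
  conv_rhs => rw [← hT.apply_inv_apply (k := k) hx]
  exact ((hT.strictMonoOn k).lt_iff_lt (hT.mapsTo k⁻¹ hx) hy).symm

theorem lt_inv_apply_iff (hT : IsIntervalAction T A B) (hx : x ∈ Ioo A B) (hy : y ∈ Ioo A B) :
    y < T k⁻¹ x ↔ T k y < x := by
  simpa using (hT.inv_apply_lt_iff (k := k⁻¹) hy hx).symm

theorem pow_apply (hT : IsIntervalAction T A B) (k : K) (n : ℕ) (hx : x ∈ Ioo A B) :
    T (k ^ n) x = (T k)^[n] x := by
  induction n with
  | zero => rw [pow_zero]; exact hT.one_apply x hx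
  | succ n ih =>
    rw [pow_succ', hT.mul_apply _ _ _ hx, ih, Function.iterate_succ_apply']

theorem conj_apply (hT : IsIntervalAction T A B) (l k : K) (hx : x ∈ Ioo A B) :
    T (l * k * l⁻¹) x = T l (T k (T l⁻¹ x)) := by
  rw [hT.mul_apply _ _ _ hx, hT.mul_apply _ _ _ (hT.mapsTo _ hx)]

theorem hasRepellingFixedPt_conj (hT : IsIntervalAction T A B)
    (hk : HasRepellingFixedPt (T k) (Ioo A B)) (l : K) :
    HasRepellingFixedPt (T (l * k * l⁻¹)) (Ioo A B) := by
  obtain ⟨c, hc, hkc, h⟩ := hk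
  refine ⟨T l c, hT.mapsTo l hc, ?_, fun x hx => ?_⟩
  · rw [hT.conj_apply _ _ (hT.mapsTo l hc), hT.inv_apply_apply hc, hkc]
  have hy := hT.mapsTo l⁻¹ hx
  rw [hT.conj_apply l k hx]
  constructor
  · intro hxc
    conv_rhs => rw [← hT.apply_inv_apply (k := l) hx]
    exact hT.strictMonoOn l (hT.mapsTo k hy) hy ((h _ hy).1 ((hT.inv_apply_lt_iff hx hc).2 hxc))
  · intro hcx
    conv_lhs => rw [← hT.apply_inv_apply (k := l) hx]
    exact hT.strictMonoOn l hy (hT.mapsTo k hy) ((h _ hy).2 ((hT.lt_inv_apply_iff hx hc).2 hcx))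

theorem exists_apply_eq (hT : IsIntervalAction T A B)
    (huniq : HasUniqueFixedPt T (Ioo A B)) (hx : x ∈ Ioo A B) (k : K) :
    ∃ c ∈ Ioo A B, T k c = c := by
  rcases eq_or_ne k 1 with rfl | hk
  · exact ⟨x, hx, hT.one_apply x hx⟩
  · obtain ⟨c, hc, -⟩ := huniq k hk
    exact ⟨c, hc⟩

theorem apply_eq_of_forall_le_apply (hT : IsIntervalAction T A B)
    (huniq : HasUniqueFixedPt T (Ioo A B)) (hk : k ≠ 1)
    (hc : c ∈ Ioo A B) (hkc : T k c = c) (hle : ∀ x ∈ Ioo A B, x ≤ T k x) (l : K) :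
    T l c = c := by
  set f := l * k * l⁻¹
  have hf : ∀ x ∈ Ioo A B, x ≤ T f x := fun x hx => by
    have hy := hT.mapsTo l⁻¹ hx
    rw [hT.conj_apply l k hx]
    conv_lhs => rw [← hT.apply_inv_apply (k := l) hx]
    exact (hT.strictMonoOn l).monotoneOn hy (hT.mapsTo k hy) (hle _ hy)
  -- a fixed point of `k * f` is fixed by both, as both only move points upwards
  obtain ⟨z, hz, hkfz⟩ := hT.exists_apply_eq huniq hc (k * f)
  rw [hT.mul_apply _ _ _ hz] at hkfz
  have hfz : T f z = z := le_antisymm ((hle _ (hT.mapsTo f hz)).trans hkfz.le) (hf z hz)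
  have hzc : z = c := (huniq k hk).unique ⟨hz, by rwa [hfz] at hkfz⟩ ⟨hc, hkc⟩
  subst hzc
  have hy := hT.mapsTo l⁻¹ hz
  have hky : T k (T l⁻¹ z) = T l⁻¹ z := by
    rw [hT.conj_apply l k hz] at hfz
    rw [← hT.inv_apply_apply (k := l) (hT.mapsTo k hy), hfz]
  have hyz : T l⁻¹ z = z := (huniq k hk).unique ⟨hy, hky⟩ ⟨hz, hkc⟩
  calc T l z = T l (T l⁻¹ z) := by rw [hyz]
    _ = z := hT.apply_inv_apply hz

theorem apply_eq_of_commute (hT : IsIntervalAction T A B)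
    (huniq : HasUniqueFixedPt T (Ioo A B)) (hk : k ≠ 1)
    (hc : c ∈ Ioo A B) (hkc : T k c = c) (hkl : Commute k l) : T l c = c :=
  (huniq k hk).unique ⟨hT.mapsTo l hc, by
    rw [← hT.mul_apply _ _ _ hc, hkl.eq, hT.mul_apply _ _ _ hc, hkc]⟩ ⟨hc, hkc⟩

variable [DenselyOrdered α]

theorem not_hasRepellingFixedPt_one (hT : IsIntervalAction T A B) :
    ¬ HasRepellingFixedPt (T 1) (Ioo A B) := by
  rintro ⟨c, hc, -, h⟩
  obtain ⟨x, hAx, hxc⟩ := exists_between hc.1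
  have hx : x ∈ Ioo A B := ⟨hAx, hxc.trans hc.2⟩
  exact ((h x hx).1 hxc).ne (hT.one_apply x hx)

end LinearOrder

section OrderTopology

variable {K α : Type*} [Group K] [ConditionallyCompleteLinearOrder α] [TopologicalSpace α]
  [OrderTopology α] [DenselyOrdered α] {T : K → α → α} {A B x y : α} {k u v : K}

theorem hasRepellingFixedPt_of_lt (hT : IsIntervalAction T A B)
    (huniq : HasUniqueFixedPt T (Ioo A B))
    (hx : x ∈ Ioo A B) (hy : y ∈ Ioo A B) (hxy : x < y) (hkx : T k x < x) (hky : y < T k y) :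
    HasRepellingFixedPt (T k) (Ioo A B) := by
  have hk : k ≠ 1 := by
    rintro rfl
    exact hkx.ne (hT.one_apply x hx)
  have hsub : ∀ {u v}, u ∈ Ioo A B → v ∈ Ioo A B → uIcc u v ⊆ Ioo A B :=
    fun hu hv => ordConnected_Ioo.uIcc_subset hu hv
  have hcont : ∀ {u v}, u ∈ Ioo A B → v ∈ Ioo A B → ContinuousOn (T k) (uIcc u v) :=
    fun hu hv => (hT.continuousOn k).mono (hsub hu hv)
  obtain ⟨c, hc, hkc⟩ := exists_mem_uIcc_apply_eq (hcont hx hy) hkx.le hky.le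
  have hcI := hsub hx hy hc
  rw [uIcc_of_le hxy.le] at hc
  have hxc : x < c := hc.1.lt_of_ne (by rintro rfl; exact hkx.ne hkc)
  have hcy : c < y := hc.2.lt_of_ne (by rintro rfl; exact hky.ne' hkc)
  refine ⟨c, hcI, hkc, fun z hz => ⟨fun hzc => ?_, fun hcz => ?_⟩⟩
  · by_contra! hzk
    obtain ⟨d, hd, hkd⟩ := exists_mem_uIcc_apply_eq (hcont hx hz) hkx.le hzk
    have hdc : d = c := (huniq k hk).unique ⟨hsub hx hz hd, hkd⟩ ⟨hcI, hkc⟩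
    exact (hd.2.trans_lt (max_lt hxc hzc)).ne hdc
  · by_contra! hzk
    obtain ⟨d, hd, hkd⟩ := exists_mem_uIcc_apply_eq (hcont hz hy) hzk hky.le
    have hdc : d = c := (huniq k hk).unique ⟨hsub hz hy hd, hkd⟩ ⟨hcI, hkc⟩
    exact ((lt_min hcz hcy).trans_le hd.1).ne' hdc

theorem hasRepellingFixedPt_mul (hT : IsIntervalAction T A B)
    (huniq : HasUniqueFixedPt T (Ioo A B))
    (hu : HasRepellingFixedPt (T u) (Ioo A B)) (hv : HasRepellingFixedPt (T v) (Ioo A B)) :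
    HasRepellingFixedPt (T (u * v)) (Ioo A B) := by
  obtain ⟨a, ha, -, hu⟩ := hu
  obtain ⟨b, hb, -, hv⟩ := hv
  obtain ⟨x, hAx, hx⟩ := exists_between (lt_min ha.1 hb.1)
  obtain ⟨y, hy, hyB⟩ := exists_between (max_lt ha.2 hb.2)
  have hxa := hx.trans_le (min_le_left _ _)
  have hay := (le_max_left _ _).trans_lt hy
  have hxI : x ∈ Ioo A B := ⟨hAx, hxa.trans ha.2⟩
  have hyI : y ∈ Ioo A B := ⟨ha.1.trans hay, hyB⟩
  have hvx := (hv x hxI).1 (hx.trans_le (min_le_right _ _))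
  have hvy := (hv y hyI).2 ((le_max_right _ _).trans_lt hy)
  refine hT.hasRepellingFixedPt_of_lt huniq hxI hyI (hxa.trans hay) ?_ ?_
  · rw [hT.mul_apply _ _ _ hxI]
    exact ((hu _ (hT.mapsTo v hxI)).1 (hvx.trans hxa)).trans hvx
  · rw [hT.mul_apply _ _ _ hyI]
    exact hvy.trans ((hu _ (hT.mapsTo v hyI)).2 (hay.trans hvy))

theorem hasRepellingFixedPt_or_inv (hT : IsIntervalAction T A B)
    (huniq : HasUniqueFixedPt T (Ioo A B))
    (hNG : ¬ ∃ x ∈ Ioo A B, ∀ k, T k x = x) (hk : k ≠ 1) :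
    HasRepellingFixedPt (T k) (Ioo A B) ∨ HasRepellingFixedPt (T k⁻¹) (Ioo A B) := by
  by_contra! h
  obtain ⟨c, ⟨hc, hkc⟩, -⟩ := huniq k hk
  have hsign : (∀ x ∈ Ioo A B, x ≤ T k x) ∨ ∀ x ∈ Ioo A B, T k x ≤ x := by
    by_contra! hsign
    obtain ⟨⟨x, hx, hkx⟩, ⟨y, hy, hky⟩⟩ := hsign
    rcases lt_trichotomy x y with hxy | rfl | hxy
    · exact h.1 (hT.hasRepellingFixedPt_of_lt huniq hx hy hxy hkx hky)
    · exact hkx.asymm hky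
    · exact h.2 (hT.hasRepellingFixedPt_of_lt huniq hy hx hxy
        ((hT.inv_apply_lt_iff hy hy).2 hky) ((hT.lt_inv_apply_iff hx hx).2 hkx))
  refine hNG ⟨c, hc, fun l => ?_⟩
  rcases hsign with hle | hge
  · exact hT.apply_eq_of_forall_le_apply huniq hk hc hkc hle l
  · refine hT.apply_eq_of_forall_le_apply huniq (inv_ne_one.2 hk) hc ?_ (fun x hx => ?_) l
    · conv_lhs => rw [← hkc]
      exact hT.inv_apply_apply hc
    · exact not_lt.1 fun h => (hge x hx).not_gt ((hT.inv_apply_lt_iff hx hx).1 h)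

theorem exists_hasRepellingFixedPt_pow_mul_inv (hT : IsIntervalAction T A B)
    (huniq : HasUniqueFixedPt T (Ioo A B))
    (hu : HasRepellingFixedPt (T u) (Ioo A B)) (k : K) :
    ∃ n : ℕ, HasRepellingFixedPt (T (u ^ n * k⁻¹)) (Ioo A B) := by
  obtain ⟨a, ha, -, hua⟩ := hu
  have hka := hT.mapsTo k ha
  obtain ⟨x, hAx, hx⟩ := exists_between (lt_min ha.1 hka.1)
  obtain ⟨y, hy, hyB⟩ := exists_between (max_lt ha.2 hka.2)
  have hxa := hx.trans_le (min_le_left _ _)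
  have hay := (le_max_left _ _).trans_lt hy
  have hxI : x ∈ Ioo A B := ⟨hAx, hxa.trans ha.2⟩
  have hyI : y ∈ Ioo A B := ⟨ha.1.trans hay, hyB⟩
  have hx'I := hT.mapsTo k⁻¹ hxI
  have hy'I := hT.mapsTo k⁻¹ hyI
  have hx' : T k⁻¹ x < a := (hT.inv_apply_lt_iff hxI ha).2 (hx.trans_le (min_le_right _ _))
  have hy' : a < T k⁻¹ y := (hT.lt_inv_apply_iff hyI ha).2 ((le_max_right _ _).trans_lt hy)
  have below : ∀ᶠ n in atTop, (T u)^[n] (T k⁻¹ x) < x := by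
    have hsub : Ioc A (T k⁻¹ x) ⊆ Ioo A B := fun w hw => ⟨hw.1, hw.2.trans_lt hx'I.2⟩
    refine eventually_iterate_lt hAx hx'I.1 (fun w hw => ⟨(hT.mapsTo u (hsub hw)).1, ?_⟩)
      ((hT.continuousOn u).mono hsub)
    exact (hua w (hsub hw)).1 (hw.2.trans_lt hx')
  have above : ∀ᶠ n in atTop, y < (T u)^[n] (T k⁻¹ y) := by
    have hsub : Ico (T k⁻¹ y) B ⊆ Ioo A B := fun w hw => ⟨hy'I.1.trans_le hw.1, hw.2⟩
    refine eventually_lt_iterate hyB hy'I.2 (fun w hw => ⟨?_, (hT.mapsTo u (hsub hw)).2⟩)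
      ((hT.continuousOn u).mono hsub)
    exact (hua w (hsub hw)).2 (hy'.trans_le hw.1)
  obtain ⟨n, hn₁, hn₂⟩ := (below.and above).exists
  refine ⟨n, hT.hasRepellingFixedPt_of_lt huniq hxI hyI (hxa.trans hay) ?_ ?_⟩
  · rwa [hT.mul_apply _ _ _ hxI, hT.pow_apply _ _ hx'I]
  · rwa [hT.mul_apply _ _ _ hyI, hT.pow_apply _ _ hy'I]

theorem isStrictTotalOrder_hasRepellingFixedPt (hT : IsIntervalAction T A B)
    (huniq : HasUniqueFixedPt T (Ioo A B))
    (hNG : ¬ ∃ x ∈ Ioo A B, ∀ k, T k x = x) :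
    IsStrictTotalOrder K fun a b => HasRepellingFixedPt (T (b * a⁻¹)) (Ioo A B) where
  irrefl a := by simpa using hT.not_hasRepellingFixedPt_one
  trans a b c hab hbc := by simpa [mul_assoc] using hT.hasRepellingFixedPt_mul huniq hbc hab
  trichotomous a b hab hba := by
    rcases eq_or_ne a b with h | h
    · exact h
    · refine ((hT.hasRepellingFixedPt_or_inv huniq hNG (k := b * a⁻¹) ?_).elim hab ?_).elim
      · simpa [mul_inv_eq_one] using h.symm
      · simpa using hba

theorem exists_forall_apply_eq (hT : IsIntervalAction T A B) (hAB : A < B)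
    (huniq : HasUniqueFixedPt T (Ioo A B)) :
    ∃ x ∈ Ioo A B, ∀ k, T k x = x := by
  by_contra hNG
  obtain ⟨k, hk⟩ : ∃ k : K, k ≠ 1 := by
    by_contra! h1
    obtain ⟨x, hx⟩ := nonempty_Ioo.2 hAB
    exact hNG ⟨x, hx, fun k => by rw [h1 k]; exact hT.one_apply x hx⟩
  obtain ⟨c, ⟨hc, hkc⟩, -⟩ := huniq k hk
  let r : K → K → Prop := fun a b => HasRepellingFixedPt (T (b * a⁻¹)) (Ioo A B)
  have : IsStrictTotalOrder K r := hT.isStrictTotalOrder_hasRepellingFixedPt huniq hNG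
  let : LinearOrder K := by classical exact linearOrderOfSTO r
  have : MulLeftStrictMono K := ⟨fun l a b (hab : r a b) =>
    show r (l * a) (l * b) by simpa [r, mul_assoc] using hT.hasRepellingFixedPt_conj hab l⟩
  have : MulRightStrictMono K := ⟨fun l a b (hab : r a b) =>
    show r (a * l) (b * l) by simpa [r, mul_assoc] using hab⟩
  have := mulLeftMono_of_mulLeftStrictMono K
  have := mulRightMono_of_mulRightStrictMono K
  have harch : ∀ a δ : K, 1 < δ → ∃ n : ℕ, a < δ ^ n := fun a δ (hδ : r 1 δ) =>
    hT.exists_hasRepellingFixedPt_pow_mul_inv huniq (by simpa [r] using hδ) a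
  exact hNG ⟨c, hc, fun l =>
    hT.apply_eq_of_commute huniq hk hc hkc (commute_of_forall_lt_pow harch k l)⟩

end OrderTopology

end IsIntervalAction

namespace OpenPartialHomeomorph

variable {α X : Type*} [TopologicalSpace α] [TopologicalSpace X] (e : OpenPartialHomeomorph α X)
  {f : X → X}

theorem mapsTo_symm_comp_comp (hf : MapsTo f e.target e.target) :
    MapsTo (e.symm ∘ f ∘ e) e.source e.source :=
  fun _ hx => e.map_target (hf (e.map_source hx))

theorem continuousOn_symm_comp_comp (hfc : Continuous f) (hf : MapsTo f e.target e.target) :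
    ContinuousOn (e.symm ∘ f ∘ e) e.source :=
  e.continuousOn_symm.comp (hfc.comp_continuousOn e.continuousOn) fun _ hx => hf (e.map_source hx)

theorem injOn_symm_comp_comp (hfi : Function.Injective f) (hf : MapsTo f e.target e.target) :
    InjOn (e.symm ∘ f ∘ e) e.source := fun _ hx _ hy h =>
  e.injOn hx hy (hfi (e.symm.injOn (hf (e.map_source hx)) (hf (e.map_source hy)) h))

theorem symm_comp_comp_apply_eq_iff (hf : MapsTo f e.target e.target) {x : α}
    (hx : x ∈ e.source) : (e.symm ∘ f ∘ e) x = x ↔ f (e x) = e x := by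
  rw [Function.comp_apply, Function.comp_apply, eq_comm, e.eq_symm_apply hx (hf (e.map_source hx)),
    eq_comm]

theorem existsUnique_symm_comp_comp_apply_eq (hf : MapsTo f e.target e.target) {q : X}
    (hq : q ∈ e.target) (hfix : ∀ y ∈ e.target, f y = y ↔ y = q) :
    ∃! x, x ∈ e.source ∧ (e.symm ∘ f ∘ e) x = x := by
  refine ⟨e.symm q, ⟨e.map_target hq, ?_⟩, fun x ⟨hx, hfx⟩ => ?_⟩
  · rw [e.symm_comp_comp_apply_eq_iff hf (e.map_target hq), e.right_inv hq]
    exact (hfix q hq).2 rfl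
  · rw [← (hfix _ (e.map_source hx)).1 ((e.symm_comp_comp_apply_eq_iff hf hx).1 hfx), e.left_inv hx]

theorem isIntervalAction_symm_comp_comp {K : Type*} [Group K] [Preorder α] {A B : α}
    (e : OpenPartialHomeomorph α X) (hs : e.source = Ioo A B) (ρ : K →* X ≃ₜ X)
    (hρ : ∀ k, MapsTo (ρ k) e.target e.target)
    (hmono : ∀ k, StrictMonoOn (e.symm ∘ ρ k ∘ e) (Ioo A B)) :
    IsIntervalAction (fun k => e.symm ∘ ρ k ∘ e) A B where
  mapsTo k := hs ▸ e.mapsTo_symm_comp_comp (hρ k)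
  strictMonoOn := hmono
  continuousOn k := hs ▸ e.continuousOn_symm_comp_comp (ρ k).continuous (hρ k)
  one_apply x hx := by
    simp only [map_one, Function.comp_apply]
    exact e.left_inv (hs ▸ hx)
  mul_apply k l x hx := by
    simp only [map_mul, Function.comp_apply]
    rw [e.right_inv (hρ l (e.map_source (hs ▸ hx)))]
    rfl

end OpenPartialHomeomorph

theorem Set.exists_ne_eq_pair_of_encard_eq_two {α : Type*} {s : Set α} {p : α} (hp : p ∈ s)
    (hs : s.encard = 2) : ∃ q, q ≠ p ∧ s = {p, q} := by
  obtain ⟨x, y, hxy, rfl⟩ := encard_eq_two.1 hs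
  rcases hp with rfl | rfl
  · exact ⟨y, hxy.symm, rfl⟩
  · exact ⟨x, hxy, pair_comm _ _⟩

def circleChart (p : Circle) : OpenPartialHomeomorph ℝ Circle :=
  haveI : Fact (0 < 2 * π) := ⟨two_pi_pos⟩
  (AddCircle.openPartialHomeomorphCoe (2 * π) (Complex.arg p)).transHomeomorph
    AddCircle.homeomorphCircle'

section circleChart

variable {p : Circle} {f : Circle ≃ₜ Circle}

theorem circleChart_source : (circleChart p).source = Ioo (Complex.arg p) (Complex.arg p + 2 * π) :=
  rfl

theorem circleChart_apply (x : ℝ) : circleChart p x = Circle.exp x := rfl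

theorem mem_circleChart_target {z : Circle} : z ∈ (circleChart p).target ↔ z ≠ p :=
  AddCircle.homeomorphCircle'.symm.injective.ne_iff' rfl

theorem mapsTo_circleChart_target (hfp : f p = p) :
    MapsTo f (circleChart p).target (circleChart p).target := fun _ hz =>
  mem_circleChart_target.2 fun h => mem_circleChart_target.1 hz (f.injective (h.trans hfp.symm))

theorem strictMonoOn_circleChart_conj (hf : OrientationPreserving f) (hfp : f p = p) :
    StrictMonoOn ((circleChart p).symm ∘ f ∘ circleChart p)
      (Ioo (Complex.arg p) (Complex.arg p + 2 * π)) := by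
  set e := circleChart p
  set T := e.symm ∘ f ∘ e
  have hmaps := mapsTo_circleChart_target hfp
  rcases (e.continuousOn_symm_comp_comp f.continuous hmaps).strictMonoOn_of_injOn_Ioo
    (by linarith [two_pi_pos]) (e.injOn_symm_comp_comp f.injective hmaps) with hmono | hanti
  · exact hmono
  obtain ⟨F, hF, hFf⟩ := hf
  have hlift : ∀ x ∈ e.source, ∃ m : ℤ, F x - T x = m * (2 * π) := fun x hx => by
    have hexp : Circle.exp (F x) = Circle.exp (T x) :=
      calc Circle.exp (F x) = f (e x) := by rw [← hFf, circleChart_apply]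
        _ = e (T x) := (e.right_inv (hmaps (e.map_source hx))).symm
        _ = Circle.exp (T x) := circleChart_apply _
    obtain ⟨m, hm⟩ := Circle.exp_eq_exp.1 hexp
    exact ⟨m, by linarith⟩
  choose! m hm using hlift
  -- `F - T` would be strictly increasing with values in `2πℤ`, making the interval countable
  have hinj : InjOn m e.source := fun x hx y hy hxy => by
    have hmx := hm x hx
    rw [hxy] at hmx
    by_contra hne
    rcases lt_or_gt_of_ne hne with h | h
    · linarith [hF h, hanti hx hy h, hm y hy]
    · linarith [hF h, hanti hy hx h, hm y hy]
  have hvol := ((mapsTo_univ m _).countable_of_injOn hinj countable_univ).measure_zero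
    MeasureTheory.volume
  rw [circleChart_source, Real.volume_Ioo, ENNReal.ofReal_eq_zero] at hvol
  linarith [two_pi_pos]

theorem existsUnique_circleChart_conj_apply_eq {q : Circle} (hqp : q ≠ p)
    (hf : FixSet f = {p, q}) :
    ∃! x, x ∈ Ioo (Complex.arg p) (Complex.arg p + 2 * π) ∧
      ((circleChart p).symm ∘ f ∘ circleChart p) x = x := by
  have hfp : p ∈ FixSet f := hf ▸ mem_insert p {q}
  refine (circleChart p).existsUnique_symm_comp_comp_apply_eq (mapsTo_circleChart_target hfp)
    (mem_circleChart_target.2 hqp) fun y hy => ?_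
  simpa [FixSet, mem_circleChart_target.1 hy] using Set.ext_iff.1 hf y

end circleChart

theorem second_global_fixed_point_general (G : Subgroup (Circle ≃ₜ Circle))
    (hor : ∀ g ∈ G, OrientationPreserving g)
    (g h : Circle ≃ₜ Circle) (hgG : g ∈ G) (hhG : h ∈ G)
    (p : Circle)
    (hH : ∀ k ∈ Subgroup.closure ({g, h} : Set (Circle ≃ₜ Circle)), k ≠ 1 →
      k p = p ∧ (FixSet k).encard = 2) :
    ∃ q : Circle, q ≠ p ∧
      (∀ k ∈ Subgroup.closure ({g, h} : Set (Circle ≃ₜ Circle)), k q = q) ∧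
      (∀ k ∈ Subgroup.closure ({g, h} : Set (Circle ≃ₜ Circle)), k ≠ 1 →
        FixSet k = {p, q}) := by
  set H := Subgroup.closure ({g, h} : Set (Circle ≃ₜ Circle))
  have hHG : H ≤ G :=
    (Subgroup.closure_le G).2 (insert_subset_iff.2 ⟨hgG, singleton_subset_iff.2 hhG⟩)
  have hpair : ∀ k ∈ H, k ≠ 1 → ∃ q, q ≠ p ∧ FixSet k = {p, q} := fun k hk hk1 =>
    Set.exists_ne_eq_pair_of_encard_eq_two (hH k hk hk1).1 (hH k hk hk1).2
  have hHp : ∀ k ∈ H, k p = p := fun k hk => by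
    rcases eq_or_ne k 1 with rfl | hk1
    · rfl
    · exact (hH k hk hk1).1
  set e := circleChart p
  have hT := e.isIntervalAction_symm_comp_comp circleChart_source H.subtype
    (fun k => mapsTo_circleChart_target (hHp k k.2))
    fun k => strictMonoOn_circleChart_conj (hor k (hHG k.2)) (hHp k k.2)
  obtain ⟨x, hx, hfix⟩ := hT.exists_forall_apply_eq (by linarith [two_pi_pos]) fun k hk => by
    obtain ⟨q, hqp, hq⟩ := hpair k k.2 (by simpa using hk)
    exact existsUnique_circleChart_conj_apply_eq hqp hq
  have hxp : e x ≠ p := mem_circleChart_target.1 (e.map_source hx)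
  have hxH : ∀ k ∈ H, k (e x) = e x := fun k hk =>
    (e.symm_comp_comp_apply_eq_iff (mapsTo_circleChart_target (hHp k hk)) hx).1 (hfix ⟨k, hk⟩)
  refine ⟨e x, hxp, hxH, fun k hk hk1 => ?_⟩
  obtain ⟨q, -, hq⟩ := hpair k hk hk1
  have hxq : e x ∈ ({p, q} : Set Circle) := hq ▸ hxH k hk
  rw [hq, (hxq.resolve_left hxp : e x = q)]

/-- Let `G ≤ Homeo⁺(S¹)` be such that every nontrivial element has at most two fixed
points, and let `g, h ∈ G` be nontrivial elements with exactly two fixed points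
sharing a fixed point `p`.  If every nontrivial element of `H = ⟨g,h⟩` fixes `p` and
has exactly two fixed points, then `H` has a second global fixed point `q ≠ p`, and
`Fix k = {p, q}` for every nontrivial `k ∈ H`. -/
theorem second_global_fixed_point (G : Subgroup (Circle ≃ₜ Circle))
    (hor : ∀ g ∈ G, OrientationPreserving g)
    (htwo : ∀ k ∈ G, k ≠ 1 → (FixSet k).encard ≤ 2)
    (g h : Circle ≃ₜ Circle) (hgG : g ∈ G) (hhG : h ∈ G)
    (hg1 : g ≠ 1) (hh1 : h ≠ 1)
    (hgfix : (FixSet g).encard = 2) (hhfix : (FixSet h).encard = 2)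
    (p : Circle) (hpg : g p = p) (hph : h p = p)
    (hH : ∀ k ∈ Subgroup.closure ({g, h} : Set (Circle ≃ₜ Circle)), k ≠ 1 →
      k p = p ∧ (FixSet k).encard = 2) :
    ∃ q : Circle, q ≠ p ∧
      (∀ k ∈ Subgroup.closure ({g, h} : Set (Circle ≃ₜ Circle)), k q = q) ∧
      (∀ k ∈ Subgroup.closure ({g, h} : Set (Circle ≃ₜ Circle)), k ≠ 1 →
        FixSet k = {p, q}) :=
  second_global_fixed_point_general G hor g h hgG hhG p hH
end
end
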